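/- arXiv:2306.12114 — 3 statements merged into one kernel-verified Lean document; each statement's English description precedes it below -/
import Mathlib

section
/- Suppose there exists an N ≥ 0 such that G(n) > 0 for all n ≥ N. Then 𝓜 is a Cantor set, and its Hausdorff dimension is given by dim_H(𝓜) = liminf_{k→∞} (k·log 2)/(−log I(k)). -/
open MeasureTheory Filter Topology

/-- The limiting cumulative distribution function `F_ε(z)` of the approximation
coefficients, for a generalised α-Lüroth expansion determined by the sequence
`t` (1-indexed, `t 1 = 1`) and the sign sequence `ε` (0-indexed: `ε n` is the
paper's `ε_{n+1}`).  Here `a_n = t n - t (n+1)` and the `n`-th summand is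
`a_n` if `a_n / t_{n+1-ε_n} < z` and `t_{n+1-ε_n}·z` otherwise. -/
noncomputable def F (t : ℕ → ℝ) (ε : ℕ → Fin 2) (z : ℝ) : ℝ :=
  ∑' n : ℕ,
    if (t (n + 1) - t (n + 2)) / t (n + 2 - (ε n : ℕ)) < z
    then t (n + 1) - t (n + 2)
    else t (n + 2 - (ε n : ℕ)) * z

/-- The expected average value `M_ε = ∫_[0,1] (1 - F_ε) dλ`. -/
noncomputable def Mavg (t : ℕ → ℝ) (ε : ℕ → Fin 2) : ℝ :=
  ∫ z in Set.Icc (0 : ℝ) 1, (1 - F t ε z)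

/-- `t` generates an α-Lüroth partition: `(t_n)_{n ≥ 1}` is a strictly decreasing
sequence in `(0,1]` with `t 1 = 1` tending to `0`. -/
structure IsLurothSeq (t : ℕ → ℝ) : Prop where
  t_one : t 1 = 1
  pos : ∀ n, 1 ≤ n → 0 < t n
  anti : ∀ n, 1 ≤ n → t (n + 1) < t n
  tendsto_zero : Tendsto t atTop (nhds 0)

/-- Concatenation `ωε` of a finite word `ω ∈ {0,1}^n` with a sequence `ε ∈ {0,1}^ℕ`. -/
def cat {n : ℕ} (w : Fin n → Fin 2) (ε : ℕ → Fin 2) : ℕ → Fin 2 :=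
  fun k => if h : k < n then w ⟨k, h⟩ else ε (k - n)

/-- The interval `I_ω = [M_{ω1̄}, M_{ω0̄}]`. -/
noncomputable def Iword (t : ℕ → ℝ) {n : ℕ} (w : Fin n → Fin 2) : Set ℝ :=
  Set.Icc (Mavg t (cat w fun _ => 1)) (Mavg t (cat w fun _ => 0))

/-- The set `𝓜 = {M_ε : ε ∈ {0,1}^ℕ}`. -/
noncomputable def calM (t : ℕ → ℝ) : Set ℝ :=
  Set.range (Mavg t)

/-- The quantity `g(k) = ∫_[0,1] (f_k^1 - f_k^0) dλ`. -/
noncomputable def gseq (t : ℕ → ℝ) (k : ℕ) : ℝ :=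
  if t (k + 1) / t k ≤ 1 / 2 then
    t k / 2 - t (k + 1) / 2 - (t (k + 1)) ^ 2 / (2 * t k)
  else
    (t k) ^ 2 / (2 * t (k + 1)) - (t (k + 1)) ^ 2 / (2 * t k)
      + 3 * t (k + 1) / 2 - 3 * t k / 2

/-- The gap/overlap function `G(n) = g(n+1) - Σ_{k ≥ n+2} g(k)`. -/
noncomputable def Gseq (t : ℕ → ℝ) (n : ℕ) : ℝ :=
  gseq t (n + 1) - ∑' k : ℕ, gseq t (n + 2 + k)

/-- The common length `I(n)` of the intervals `I_ω` for `ω ∈ {0,1}^n`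
(computed from the all-zeros word `ω = 0^n`). -/
noncomputable def Ilen (t : ℕ → ℝ) (n : ℕ) : ℝ :=
  Mavg t (fun _ => 0) - Mavg t (fun k => if k < n then 0 else 1)

/-- A Cantor set in `ℝ`: a nonempty compact set with empty interior and
no isolated points. -/
def IsCantorSet (S : Set ℝ) : Prop :=
  S.Nonempty ∧ IsCompact S ∧ interior S = ∅ ∧ ∀ x ∈ S, AccPt x (Filter.principal S)

namespace Luroth
open MeasureTheory Filter Topology
open scoped ENNReal NNReal

variable {t : ℕ → ℝ}

lemma t_anti (ht : IsLurothSeq t) : ∀ n m, 1 ≤ n → n ≤ m → t m ≤ t n := by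
  intro n m h1 hnm
  induction m with
  | zero => omega
  | succ k ih =>
    rcases Nat.lt_or_ge n (k+1) with h | h
    · have hk : n ≤ k := by omega
      exact le_trans (ht.anti k (le_trans h1 hk)).le (ih hk)
    · have : n = k + 1 := by omega
      subst this; rfl

lemma t_le_one (ht : IsLurothSeq t) (n : ℕ) (h : 1 ≤ n) : t n ≤ 1 := by
  simpa [ht.t_one] using t_anti ht 1 n le_rfl h

lemma a_pos (ht : IsLurothSeq t) (n : ℕ) : 0 < t (n+1) - t (n+2) :=
  sub_pos.2 (ht.anti (n+1) (by omega))

lemma summable_a (ht : IsLurothSeq t) : Summable (fun n => t (n+1) - t (n+2)) := by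
  have h0 : ∀ i, 0 ≤ t (i+1) - t (i+2) := fun i => (a_pos ht i).le
  refine ⟨t 1, (hasSum_iff_tendsto_nat_of_nonneg h0 _).2 ?_⟩
  have : ∀ n, ∑ i ∈ Finset.range n, (t (i+1) - t (i+2)) = t 1 - t (n+1) := by
    intro n
    simpa using Finset.sum_range_sub' (fun i => t (i+1)) n
  simp only [this]
  have ht0 : Tendsto (fun n : ℕ => t (n+1)) atTop (nhds 0) :=
    ht.tendsto_zero.comp (tendsto_add_atTop_nat 1)
  simpa using tendsto_const_nhds.sub ht0

lemma gseq_pos (ht : IsLurothSeq t) (k : ℕ) (hk : 1 ≤ k) : 0 < gseq t k := by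
  have h1 : 0 < t k := ht.pos k hk
  have h2 : 0 < t (k+1) := ht.pos (k+1) (by omega)
  have h3 : t (k+1) < t k := ht.anti k hk
  unfold gseq
  split_ifs with h
  · have hh : t (k+1) ≤ 1/2 * t k := (div_le_iff₀ h1).1 h
    have key : t k / 2 - t (k + 1) / 2 - (t (k+1))^2 / (2 * t k)
        = (t k ^ 2 - t k * t (k+1) - t (k+1)^2) / (2 * t k) := by
      field_simp
    rw [key]
    apply div_pos _ (by positivity)
    nlinarith
  · have key : (t k)^2 / (2 * t (k+1)) - (t (k+1))^2 / (2 * t k)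
        + 3 * t (k+1) / 2 - 3 * t k / 2 = (t k - t (k+1))^3 / (2 * t k * t (k+1)) := by
      field_simp; ring
    rw [key]
    exact div_pos (pow_pos (sub_pos.2 h3) 3) (by positivity)

lemma gseq_le_a (ht : IsLurothSeq t) (k : ℕ) (hk : 1 ≤ k) : gseq t k ≤ t k - t (k+1) := by
  have h1 : 0 < t k := ht.pos k hk
  have h2 : 0 < t (k+1) := ht.pos (k+1) (by omega)
  have h3 : t (k+1) < t k := ht.anti k hk
  unfold gseq
  split_ifs with h
  · have := div_nonneg (sq_nonneg (t (k+1))) (by linarith : (0:ℝ) ≤ 2 * t k)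
    linarith
  · push_neg at h
    have hr : 1/2 * t k < t (k+1) := (lt_div_iff₀ h1).1 h
    have key : (t k)^2 / (2 * t (k+1)) - (t (k+1))^2 / (2 * t k)
        + 3 * t (k+1) / 2 - 3 * t k / 2 = (t k - t (k+1))^3 / (2 * t k * t (k+1)) := by
      field_simp; ring
    rw [key, div_le_iff₀ (by positivity)]
    nlinarith [sq_nonneg (t k - t (k+1))]

lemma summable_g (ht : IsLurothSeq t) : Summable (fun n => gseq t (n+1)) :=
  Summable.of_nonneg_of_le (fun n => (gseq_pos ht (n+1) (by omega)).le)
    (fun n => gseq_le_a ht (n+1) (by omega)) (summable_a ht)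

end Luroth
namespace Luroth
open MeasureTheory Filter Topology
open scoped ENNReal NNReal

variable {t : ℕ → ℝ}

lemma fin2_le (e : Fin 2) : (e : ℕ) ≤ 1 := by omega

lemma tau_pos (ht : IsLurothSeq t) (n : ℕ) (e : Fin 2) : 0 < t (n + 2 - (e : ℕ)) :=
  ht.pos _ (by have := fin2_le e; omega)

lemma ite_eq_min {a τ z : ℝ} (hτ : 0 < τ) :
    (if a / τ < z then a else τ * z) = min a (τ * z) := by
  split_ifs with h
  · rw [div_lt_iff₀ hτ] at h
    exact (min_eq_left (by linarith)).symm
  · push_neg at h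
    rw [le_div_iff₀ hτ] at h
    exact (min_eq_right (by linarith)).symm

lemma F_eq_tsum_min (ht : IsLurothSeq t) (ε : ℕ → Fin 2) (z : ℝ) :
    F t ε z = ∑' n, min (t (n+1) - t (n+2)) (t (n + 2 - (ε n : ℕ)) * z) := by
  unfold F
  exact tsum_congr fun n => ite_eq_min (tau_pos ht n (ε n))

lemma min_nonneg' (ht : IsLurothSeq t) (n : ℕ) (e : Fin 2) {z : ℝ} (hz : 0 ≤ z) :
    0 ≤ min (t (n+1) - t (n+2)) (t (n + 2 - (e : ℕ)) * z) :=
  le_min (a_pos ht n).le (mul_nonneg (tau_pos ht n e).le hz)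

lemma min_le_a (n : ℕ) (x : ℝ) :
    min (t (n+1) - t (n+2)) x ≤ t (n+1) - t (n+2) := min_le_left _ _

lemma summable_min (ht : IsLurothSeq t) (ε : ℕ → Fin 2) {z : ℝ} (hz : 0 ≤ z) :
    Summable (fun n => min (t (n+1) - t (n+2)) (t (n + 2 - (ε n : ℕ)) * z)) :=
  Summable.of_nonneg_of_le (fun n => min_nonneg' ht n (ε n) hz)
    (fun n => min_le_a n _) (summable_a ht)

lemma tsum_a_eq_one (ht : IsLurothSeq t) : ∑' n, (t (n+1) - t (n+2)) = 1 := by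
  have h0 : ∀ i, 0 ≤ t (i+1) - t (i+2) := fun i => (a_pos ht i).le
  have : HasSum (fun n => t (n+1) - t (n+2)) (t 1) := by
    rw [hasSum_iff_tendsto_nat_of_nonneg h0]
    have hsum : ∀ n, ∑ i ∈ Finset.range n, (t (i+1) - t (i+2)) = t 1 - t (n+1) := by
      intro n; simpa using Finset.sum_range_sub' (fun i => t (i+1)) n
    simp only [hsum]
    have ht0 : Tendsto (fun n : ℕ => t (n+1)) atTop (nhds 0) :=
      ht.tendsto_zero.comp (tendsto_add_atTop_nat 1)
    simpa using tendsto_const_nhds.sub ht0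
  rw [this.tsum_eq, ht.t_one]

lemma one_sub_F (ht : IsLurothSeq t) (ε : ℕ → Fin 2) {z : ℝ} (hz : 0 ≤ z) :
    1 - F t ε z =
      ∑' n, ((t (n+1) - t (n+2)) - min (t (n+1) - t (n+2)) (t (n + 2 - (ε n : ℕ)) * z)) := by
  rw [Summable.tsum_sub (summable_a ht) (summable_min ht ε hz), F_eq_tsum_min ht ε z,
    tsum_a_eq_one ht]

/-- The basic integral computation. -/
lemma integral_min {a τ : ℝ} (ha : 0 < a) (hτ : 0 < τ) :
    ∫ z in Set.Icc (0:ℝ) 1, min a (τ*z) = if a < τ then a - a^2/(2*τ) else τ/2 := by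
  have cont : Continuous fun z : ℝ => min a (τ*z) :=
    continuous_const.min (continuous_const.mul continuous_id)
  rw [MeasureTheory.integral_Icc_eq_integral_Ioc,
    ← intervalIntegral.integral_of_le (zero_le_one)]
  split_ifs with h
  · set c := a/τ with hc
    have hc0 : 0 < c := div_pos ha hτ
    have hc1 : c < 1 := (div_lt_one hτ).2 h
    rw [← intervalIntegral.integral_add_adjacent_intervals (a := (0:ℝ)) (b := c) (c := 1)
      (cont.intervalIntegrable _ _) (cont.intervalIntegrable _ _)]
    have h1 : ∫ z in (0:ℝ)..c, min a (τ*z) = ∫ z in (0:ℝ)..c, τ*z := by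
      refine intervalIntegral.integral_congr fun z hz => ?_
      rw [Set.uIcc_of_le hc0.le] at hz
      refine min_eq_right ?_
      calc τ * z ≤ τ * c := by nlinarith [hz.2]
      _ = a := by rw [hc]; field_simp
    have h2 : ∫ z in c..(1:ℝ), min a (τ*z) = ∫ z in c..(1:ℝ), a := by
      refine intervalIntegral.integral_congr fun z hz => ?_
      rw [Set.uIcc_of_le hc1.le] at hz
      refine min_eq_left ?_
      have : τ * c ≤ τ * z := by nlinarith [hz.1]
      have hca : τ * c = a := by rw [hc]; field_simp
      linarith
    rw [h1, h2, intervalIntegral.integral_const, intervalIntegral.integral_const_mul,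
      integral_id]
    rw [hc]; field_simp
    linear_combination (2*a*τ - 2*a^2) * (mul_inv_cancel₀ hτ.ne')
  · push_neg at h
    have heq : ∫ z in (0:ℝ)..1, min a (τ*z) = ∫ z in (0:ℝ)..1, τ*z := by
      refine intervalIntegral.integral_congr fun z hz => ?_
      rw [Set.uIcc_of_le zero_le_one] at hz
      refine min_eq_right ?_
      nlinarith [hz.2]
    rw [heq, intervalIntegral.integral_const_mul, integral_id]
    ring

end Luroth
namespace Luroth
open MeasureTheory Filter Topology
open scoped ENNReal NNReal

variable {t : ℕ → ℝ}

/-- Closed form of `∫_0^1 min (a_n) (τ_n z) dz`. -/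
noncomputable def cval (t : ℕ → ℝ) (n : ℕ) (e : Fin 2) : ℝ :=
  if (t (n+1) - t (n+2)) < t (n + 2 - (e:ℕ)) then
    (t (n+1) - t (n+2)) - (t (n+1) - t (n+2))^2/(2 * t (n + 2 - (e:ℕ)))
  else t (n + 2 - (e:ℕ))/2

lemma integral_min' (ht : IsLurothSeq t) (n : ℕ) (e : Fin 2) :
    ∫ z in Set.Icc (0:ℝ) 1, min (t (n+1) - t (n+2)) (t (n + 2 - (e:ℕ)) * z) = cval t n e :=
  integral_min (a_pos ht n) (tau_pos ht n e)

lemma cval_nonneg (ht : IsLurothSeq t) (n : ℕ) (e : Fin 2) : 0 ≤ cval t n e := by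
  have ha := a_pos ht n
  have hτ := tau_pos ht n e
  unfold cval
  split_ifs with h
  · have h1 : (t (n+1) - t (n+2))^2/(2 * t (n + 2 - (e:ℕ))) ≤ (t (n+1) - t (n+2))/2 := by
      rw [div_le_div_iff₀ (by positivity) (by norm_num)]
      nlinarith
    linarith
  · positivity

lemma cval_le_a (ht : IsLurothSeq t) (n : ℕ) (e : Fin 2) :
    cval t n e ≤ t (n+1) - t (n+2) := by
  have ha := a_pos ht n
  have hτ := tau_pos ht n e
  unfold cval
  split_ifs with h
  · have : 0 ≤ (t (n+1) - t (n+2))^2/(2 * t (n + 2 - (e:ℕ))) := by positivity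
    linarith
  · push_neg at h
    linarith

lemma summable_acval (ht : IsLurothSeq t) (ε : ℕ → Fin 2) :
    Summable (fun n => (t (n+1) - t (n+2)) - cval t n (ε n)) :=
  Summable.of_nonneg_of_le (fun n => sub_nonneg.2 (cval_le_a ht n (ε n)))
    (fun n => by have := cval_nonneg ht n (ε n); linarith) (summable_a ht)

lemma Mavg_repr (ht : IsLurothSeq t) (ε : ℕ → Fin 2) :
    Mavg t ε = ∑' n, ((t (n+1) - t (n+2)) - cval t n (ε n)) := by
  have hcont : ∀ n : ℕ, Continuous (fun z : ℝ =>
      (t (n+1) - t (n+2)) - min (t (n+1) - t (n+2)) (t (n + 2 - (ε n : ℕ)) * z)) :=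
    fun n => continuous_const.sub (continuous_const.min (continuous_const.mul continuous_id))
  have h1 : Mavg t ε = ∫ z in Set.Icc (0:ℝ) 1,
      ∑' n, ((t (n+1) - t (n+2)) - min (t (n+1) - t (n+2)) (t (n + 2 - (ε n : ℕ)) * z)) := by
    unfold Mavg
    refine setIntegral_congr_fun measurableSet_Icc fun z hz => ?_
    exact one_sub_F ht ε hz.1
  rw [h1, integral_tsum (fun n => (hcont n).aestronglyMeasurable) ?_]
  · refine tsum_congr fun n => ?_
    have hint : IntegrableOn (fun z : ℝ =>
        min (t (n+1) - t (n+2)) (t (n + 2 - (ε n : ℕ)) * z)) (Set.Icc 0 1) volume :=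
      (continuous_const.min (continuous_const.mul continuous_id)).integrableOn_Icc
    rw [integral_sub (integrableOn_const (C := t (n+1) - t (n+2)) measure_Icc_lt_top.ne enorm_ne_top) hint,
      setIntegral_const, integral_min' ht n (ε n)]
    simp [Real.volume_Icc]
  · -- the bound on the lintegrals
    have hb : ∀ n : ℕ, (∫⁻ z in Set.Icc (0:ℝ) 1, ↑‖(t (n+1) - t (n+2)) -
        min (t (n+1) - t (n+2)) (t (n + 2 - (ε n : ℕ)) * z)‖₊ ∂volume)
        ≤ ENNReal.ofReal (t (n+1) - t (n+2)) := by
      intro n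
      have hle : ∀ z ∈ Set.Icc (0:ℝ) 1,
          (‖(t (n+1) - t (n+2)) -
            min (t (n+1) - t (n+2)) (t (n + 2 - (ε n : ℕ)) * z)‖₊ : ℝ≥0∞)
          ≤ ENNReal.ofReal (t (n+1) - t (n+2)) := by
        intro z hz
        have h0 := min_nonneg' ht n (ε n) hz.1
        have h1 := min_le_a (t := t) n (t (n + 2 - (ε n : ℕ)) * z)
        rw [← ENNReal.ofReal_coe_nnreal, coe_nnnorm]
        apply ENNReal.ofReal_le_ofReal
        rw [Real.norm_eq_abs, abs_of_nonneg (by linarith)]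
        linarith
      refine le_trans (setLIntegral_mono measurable_const hle) ?_
      rw [setLIntegral_const]
      simp [Real.volume_Icc]
    refine ne_top_of_le_ne_top ?_ (ENNReal.tsum_le_tsum hb)
    rw [← ENNReal.ofReal_tsum_of_nonneg (fun n => (a_pos ht n).le) (summable_a ht)]
    exact ENNReal.ofReal_ne_top

/-- The linear part `S(ε) = Σ ε_n g(n+1)`. -/
noncomputable def Ssum (t : ℕ → ℝ) (ε : ℕ → Fin 2) : ℝ :=
  ∑' n, ((ε n : ℕ) : ℝ) * gseq t (n+1)

lemma summable_S (ht : IsLurothSeq t) (ε : ℕ → Fin 2) :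
    Summable (fun n => ((ε n : ℕ) : ℝ) * gseq t (n+1)) := by
  refine Summable.of_nonneg_of_le
    (fun n => mul_nonneg (by positivity) (gseq_pos ht (n+1) (by omega)).le)
    (fun n => ?_) (summable_g ht)
  have h1 : ((ε n : ℕ) : ℝ) ≤ 1 := by exact_mod_cast fin2_le (ε n)
  nlinarith [(gseq_pos ht (n+1) (by omega)).le]

lemma cval_diff (ht : IsLurothSeq t) (n : ℕ) :
    cval t n 1 - cval t n 0 = gseq t (n+1) := by
  have h1 : 0 < t (n+1) := ht.pos _ (by omega)
  have h2 : 0 < t (n+2) := ht.pos _ (by omega)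
  have h3 : t (n+2) < t (n+1) := ht.anti (n+1) (by omega)
  have e1 : ((1 : Fin 2) : ℕ) = 1 := rfl
  have e0 : ((0 : Fin 2) : ℕ) = 0 := rfl
  have hidx1 : n + 2 - ((1 : Fin 2) : ℕ) = n + 1 := by omega
  have hidx0 : n + 2 - ((0 : Fin 2) : ℕ) = n + 2 := by omega
  unfold cval gseq
  rw [hidx1, hidx0]
  have hcond1 : t (n+1) - t (n+2) < t (n+1) := by linarith
  rw [if_pos hcond1]
  rcases lt_or_ge (t (n+1) - t (n+2)) (t (n+2)) with h | h
  · rw [if_pos h, if_neg ?_]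
    · field_simp
      ring
    · push_neg
      rw [lt_div_iff₀ h1]
      show 1/2 * t (n+1) < t (n+2)
      linarith
  · rw [if_neg (not_lt.2 h), if_pos ?_]
    · field_simp
      ring
    · rw [div_le_iff₀ h1]
      show t (n+2) ≤ 1/2 * t (n+1)
      linarith

lemma Mavg_eq_sub (ht : IsLurothSeq t) (ε : ℕ → Fin 2) :
    Mavg t ε = Mavg t (fun _ => 0) - Ssum t ε := by
  rw [Mavg_repr ht ε, Mavg_repr ht (fun _ => 0)]
  simp only [Ssum]
  rw [← Summable.tsum_sub (summable_acval ht (fun _ => 0)) (summable_S ht ε)]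
  refine tsum_congr fun n => ?_
  show (t (n+1) - t (n+2)) - cval t n (ε n)
      = ((t (n+1) - t (n+2)) - cval t n 0) - ((ε n : ℕ) : ℝ) * gseq t (n+1)
  have := cval_diff ht n
  have h2 : ε n = 0 ∨ ε n = 1 := by omega
  rcases h2 with h | h <;> rw [h] <;> simp <;> linarith

end Luroth
namespace Luroth
open MeasureTheory Filter Topology
open scoped ENNReal NNReal

variable {t : ℕ → ℝ}

/-- Tail sums of the `g` sequence. -/
noncomputable def rtail (t : ℕ → ℝ) (n : ℕ) : ℝ := ∑' k, gseq t (n + 1 + k)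

lemma summable_gt (ht : IsLurothSeq t) (m : ℕ) : Summable (fun k => gseq t (m + 1 + k)) := by
  have h := (summable_nat_add_iff (f := fun n => gseq t (n+1)) m).2 (summable_g ht)
  exact h.congr fun k => by congr 1; omega

lemma rtail_pos (ht : IsLurothSeq t) (n : ℕ) : 0 < rtail t n :=
  Summable.tsum_pos (summable_gt ht n) (fun k => (gseq_pos ht _ (by omega)).le) 0
    (gseq_pos ht _ (by omega))

lemma rtail_succ (ht : IsLurothSeq t) (n : ℕ) :
    rtail t n = gseq t (n+1) + rtail t (n+1) := by
  unfold rtail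
  rw [Summable.tsum_eq_zero_add (summable_gt ht n)]
  have h2 : ∑' (b : ℕ), gseq t (n+1+(b+1)) = ∑' (k : ℕ), gseq t (n+1+1+k) :=
    tsum_congr fun k => by congr 1; omega
  rw [h2]

lemma rtail_succ_lt (ht : IsLurothSeq t) (n : ℕ) : rtail t (n+1) < rtail t n := by
  have := rtail_succ ht n
  have := gseq_pos ht (n+1) (by omega)
  linarith

lemma rtail_strict_anti (ht : IsLurothSeq t) {a b : ℕ} (h : a < b) : rtail t b < rtail t a := by
  induction b with
  | zero => omega
  | succ k ih =>
    rcases Nat.lt_or_ge a k with h' | h'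
    · exact lt_trans (rtail_succ_lt ht k) (ih h')
    · have : a = k := by omega
      subst this; exact rtail_succ_lt ht a

lemma hasSum_tele (ht : IsLurothSeq t) (m : ℕ) (hm : 1 ≤ m) :
    HasSum (fun k => t (m+k) - t (m+k+1)) (t m) := by
  have h0 : ∀ k : ℕ, 0 ≤ t (m+k) - t (m+k+1) :=
    fun k => sub_nonneg.2 (ht.anti (m+k) (by omega)).le
  rw [hasSum_iff_tendsto_nat_of_nonneg h0]
  have hsum : ∀ n, ∑ i ∈ Finset.range n, (t (m+i) - t (m+i+1)) = t m - t (m+n) := by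
    intro n
    simpa [add_assoc] using Finset.sum_range_sub' (fun i => t (m+i)) n
  simp only [hsum]
  have ht0 : Tendsto (fun n : ℕ => t (m+n)) atTop (nhds 0) := by
    have := ht.tendsto_zero.comp (tendsto_add_atTop_nat m)
    exact this.congr fun n => by simp [Nat.add_comm]
  simpa using tendsto_const_nhds.sub ht0

lemma rtail_le_t (ht : IsLurothSeq t) (n : ℕ) : rtail t n ≤ t (n+1) := by
  have h := (hasSum_tele ht (n+1) (by omega)).tsum_eq
  rw [← h]
  refine Summable.tsum_le_tsum (fun k => ?_) (summable_gt ht n) (hasSum_tele ht (n+1) (by omega)).summable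
  exact gseq_le_a ht (n+1+k) (by omega)

lemma rtail_tendsto_zero (ht : IsLurothSeq t) : Tendsto (rtail t) atTop (nhds 0) := by
  refine squeeze_zero (fun n => (rtail_pos ht n).le) (rtail_le_t ht) ?_
  have := ht.tendsto_zero.comp (tendsto_add_atTop_nat 1)
  exact this.congr fun n => by simp [Nat.add_comm]

lemma rtail_eq_sum (ht : IsLurothSeq t) (a : ℕ) :
    ∀ b, a ≤ b → rtail t a = (∑ k ∈ Finset.Ico a b, gseq t (k+1)) + rtail t b := by
  intro b
  induction b with
  | zero => intro h; have : a = 0 := by omega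
            subst this; simp
  | succ m ih =>
    intro h
    rcases Nat.lt_or_ge a (m+1) with h' | h'
    · have ham : a ≤ m := by omega
      rw [ih ham, Finset.sum_Ico_succ_top ham, rtail_succ ht m]
      ring
    · have : a = m + 1 := by omega
      subst this; simp

lemma gap (ht : IsLurothSeq t) {N : ℕ} (hG : ∀ n, N ≤ n → 0 < Gseq t n)
    (k : ℕ) (hk : N ≤ k) : rtail t (k+1) < gseq t (k+1) := by
  have h := hG k hk
  unfold Gseq at h
  have he : rtail t (k+1) = ∑' j, gseq t (k+2+j) := tsum_congr fun j => by norm_num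
  rw [he]
  linarith

/-- Anchor of the length-`n` prefix of `η`, in the tail system shifted by `N`. -/
noncomputable def anchn (t : ℕ → ℝ) (N : ℕ) (η : ℕ → Fin 2) (n : ℕ) : ℝ :=
  ∑ k ∈ Finset.range n, ((η k : ℕ) : ℝ) * gseq t (N + 1 + k)

/-- The tail coding map. -/
noncomputable def Phi (t : ℕ → ℝ) (N : ℕ) (η : ℕ → Fin 2) : ℝ :=
  ∑' k, ((η k : ℕ) : ℝ) * gseq t (N + 1 + k)

/-- The tail attractor set. -/
def Tset (t : ℕ → ℝ) (N : ℕ) : Set ℝ := Set.range (Phi t N)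

lemma summable_phi (ht : IsLurothSeq t) (N : ℕ) (η : ℕ → Fin 2) :
    Summable (fun k => ((η k : ℕ) : ℝ) * gseq t (N + 1 + k)) := by
  refine Summable.of_nonneg_of_le
    (fun k => mul_nonneg (by positivity) (gseq_pos ht _ (by omega)).le)
    (fun k => ?_) (summable_gt ht N)
  have h1 : ((η k : ℕ) : ℝ) ≤ 1 := by exact_mod_cast fin2_le (η k)
  nlinarith [(gseq_pos ht (N+1+k) (by omega)).le]

lemma Phi_split (ht : IsLurothSeq t) (N : ℕ) (η : ℕ → Fin 2) (n : ℕ) :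
    Phi t N η = anchn t N η n + ∑' k, ((η (k+n) : ℕ) : ℝ) * gseq t (N + 1 + (k+n)) :=
  (Summable.sum_add_tsum_nat_add n (summable_phi ht N η)).symm

lemma tail_nonneg (ht : IsLurothSeq t) (N : ℕ) (η : ℕ → Fin 2) (n : ℕ) :
    0 ≤ ∑' k, ((η (k+n) : ℕ) : ℝ) * gseq t (N + 1 + (k+n)) :=
  tsum_nonneg fun k => mul_nonneg (by positivity) (gseq_pos ht _ (by omega)).le

lemma tail_le (ht : IsLurothSeq t) (N : ℕ) (η : ℕ → Fin 2) (n : ℕ) :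
    ∑' k, ((η (k+n) : ℕ) : ℝ) * gseq t (N + 1 + (k+n)) ≤ rtail t (N + n) := by
  have hs1 : Summable (fun k => ((η (k+n) : ℕ) : ℝ) * gseq t (N + 1 + (k+n))) :=
    (summable_nat_add_iff n).2 (summable_phi ht N η)
  have hs2 : Summable (fun k => gseq t (N + n + 1 + k)) := summable_gt ht (N+n)
  have h1 : ∑' k, ((η (k+n) : ℕ) : ℝ) * gseq t (N + 1 + (k+n))
      ≤ ∑' k, gseq t (N + n + 1 + k) := by
    refine Summable.tsum_le_tsum (fun k => ?_) hs1 hs2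
    have hg : 0 ≤ gseq t (N + 1 + (k+n)) := (gseq_pos ht _ (by omega)).le
    have h1 : ((η (k+n) : ℕ) : ℝ) ≤ 1 := by exact_mod_cast fin2_le (η (k+n))
    have : ((η (k+n) : ℕ) : ℝ) * gseq t (N + 1 + (k+n)) ≤ gseq t (N + 1 + (k+n)) := by
      nlinarith
    calc ((η (k+n) : ℕ) : ℝ) * gseq t (N + 1 + (k+n)) ≤ gseq t (N + 1 + (k+n)) := this
    _ = gseq t (N + n + 1 + k) := by congr 1; omega
  exact h1

lemma Phi_nonneg (ht : IsLurothSeq t) (N : ℕ) (η : ℕ → Fin 2) : 0 ≤ Phi t N η :=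
  tsum_nonneg fun k => mul_nonneg (by positivity) (gseq_pos ht _ (by omega)).le

lemma Phi_mem_Icc (ht : IsLurothSeq t) (N : ℕ) (η : ℕ → Fin 2) (n : ℕ) :
    Phi t N η ∈ Set.Icc (anchn t N η n) (anchn t N η n + rtail t (N + n)) := by
  rw [Phi_split ht N η n]
  constructor
  · linarith [tail_nonneg ht N η n]
  · linarith [tail_le ht N η n]

/-- Core separation estimate at the first differing coordinate. -/
lemma anchn_sep (ht : IsLurothSeq t) {N : ℕ} (hG : ∀ n, N ≤ n → 0 < Gseq t n)
    {η η' : ℕ → Fin 2} {j n : ℕ} (hjn : j < n)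
    (hpre : ∀ k, k < j → η k = η' k) (h0 : η j = 0) (h1 : η' j = 1) :
    anchn t N η n + rtail t (N + n) < anchn t N η' n := by
  have hsplit : ∀ σ : ℕ → Fin 2, anchn t N σ n =
      (∑ k ∈ Finset.range j, ((σ k : ℕ) : ℝ) * gseq t (N + 1 + k))
      + ((σ j : ℕ) : ℝ) * gseq t (N + 1 + j)
      + ∑ k ∈ Finset.Ico (j+1) n, ((σ k : ℕ) : ℝ) * gseq t (N + 1 + k) := by
    intro σ
    rw [anchn, ← Finset.sum_range_add_sum_Ico _ (by omega : j + 1 ≤ n),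
      Finset.sum_range_succ]
  have hcommon : ∑ k ∈ Finset.range j, ((η k : ℕ) : ℝ) * gseq t (N + 1 + k)
      = ∑ k ∈ Finset.range j, ((η' k : ℕ) : ℝ) * gseq t (N + 1 + k) := by
    refine Finset.sum_congr rfl fun k hk => ?_
    rw [hpre k (Finset.mem_range.1 hk)]
  have b1 : ∑ k ∈ Finset.Ico (j+1) n, ((η k : ℕ) : ℝ) * gseq t (N + 1 + k)
      ≤ ∑ k ∈ Finset.Ico (j+1) n, gseq t (N + 1 + k) := by
    refine Finset.sum_le_sum fun k _ => ?_
    have hg : 0 ≤ gseq t (N + 1 + k) := (gseq_pos ht _ (by omega)).le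
    have hv : ((η k : ℕ) : ℝ) ≤ 1 := by exact_mod_cast fin2_le (η k)
    nlinarith
  have b2 : 0 ≤ ∑ k ∈ Finset.Ico (j+1) n, ((η' k : ℕ) : ℝ) * gseq t (N + 1 + k) :=
    Finset.sum_nonneg fun k _ => mul_nonneg (by positivity) (gseq_pos ht _ (by omega)).le
  have b3 : (∑ k ∈ Finset.Ico (j+1) n, gseq t (N + 1 + k)) + rtail t (N + n)
      = rtail t (N + j + 1) := by
    have h := rtail_eq_sum ht (N+j+1) (N+n) (by omega)
    rw [h]
    congr 1
    rw [Finset.sum_Ico_eq_sum_range, Finset.sum_Ico_eq_sum_range]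
    have hlen : (N+n) - (N+j+1) = n - (j+1) := by omega
    rw [hlen]
    exact Finset.sum_congr rfl fun i _ => by congr 1; omega
  have b4 : rtail t (N + j + 1) < gseq t (N + 1 + j) := by
    have := gap ht hG (N + j) (by omega)
    have hidx : N + j + 1 = N + 1 + j := by omega
    rw [hidx] at this
    have hidx2 : N + j + 1 = N + 1 + j := by omega
    rw [hidx2]
    exact this
  have hv0 : ((η j : ℕ) : ℝ) = 0 := by rw [h0]; simp
  have hv1 : ((η' j : ℕ) : ℝ) = 1 := by rw [h1]; simp
  rw [hsplit η, hsplit η', hv0, hv1, hcommon]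
  linarith

lemma exists_first_diff {η η' : ℕ → Fin 2} {n : ℕ} (h : ∃ k, k < n ∧ η k ≠ η' k) :
    ∃ j, j < n ∧ (∀ k, k < j → η k = η' k) ∧ η j ≠ η' j := by
  classical
  have hfind := Nat.find_spec h
  refine ⟨Nat.find h, hfind.1, fun k hk => ?_, hfind.2⟩
  have := Nat.find_min h hk
  push_neg at this
  by_contra hne
  exact hne (by
    by_contra hne2
    exact hne2 (by_contra fun h3 => absurd (this (by omega)) (by omega)))

lemma anchn_sep' (ht : IsLurothSeq t) {N : ℕ} (hG : ∀ n, N ≤ n → 0 < Gseq t n)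
    {η η' : ℕ → Fin 2} {n : ℕ} (h : ∃ k, k < n ∧ η k ≠ η' k) :
    anchn t N η n + rtail t (N + n) < anchn t N η' n ∨
    anchn t N η' n + rtail t (N + n) < anchn t N η n := by
  obtain ⟨j, hjn, hpre, hdiff⟩ := exists_first_diff h
  have hcase : η j = 0 ∨ η j = 1 := by omega
  rcases hcase with hc | hc
  · have hc' : η' j = 1 := by omega
    exact Or.inl (anchn_sep ht hG hjn hpre hc hc')
  · have hc' : η' j = 0 := by omega
    exact Or.inr (anchn_sep ht hG hjn (fun k hk => (hpre k hk).symm) hc' hc)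

end Luroth
namespace Luroth
open MeasureTheory Filter Topology
open scoped ENNReal NNReal

variable {t : ℕ → ℝ}

lemma Ssum_eq_Phi0 (ε : ℕ → Fin 2) : Ssum t ε = Phi t 0 ε :=
  tsum_congr fun k => by rw [show 0 + 1 + k = k + 1 by omega]

lemma Ssum_zero (ht : IsLurothSeq t) : Ssum t (fun _ => 0) = 0 := by
  unfold Ssum; simp

lemma Ilen_eq (ht : IsLurothSeq t) (n : ℕ) : Ilen t n = rtail t n := by
  unfold Ilen
  rw [Mavg_eq_sub ht (fun k => if k < n then 0 else 1), Mavg_eq_sub ht (fun _ => 0),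
    Ssum_zero ht]
  have h : Ssum t (fun k => if k < n then 0 else 1) = rtail t n := by
    unfold Ssum
    rw [← Summable.sum_add_tsum_nat_add n (summable_S ht (fun k => if k < n then 0 else 1))]
    have h1 : ∑ k ∈ Finset.range n,
        ((Fin.val (if k < n then (0:Fin 2) else 1) : ℕ) : ℝ) * gseq t (k+1) = 0 := by
      refine Finset.sum_eq_zero fun k hk => ?_
      rw [if_pos (Finset.mem_range.1 hk)]
      simp
    have h2 : ∑' k, ((Fin.val (if k + n < n then (0:Fin 2) else 1) : ℕ) : ℝ) * gseq t (k+n+1)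
        = rtail t n := by
      refine tsum_congr fun k => ?_
      rw [if_neg (by omega)]
      have h3 : ((1:Fin 2):ℕ) = 1 := rfl
      rw [h3]
      push_cast
      rw [one_mul]
      congr 1
      omega
    rw [h1, h2, zero_add]
  rw [h]
  ring

/-- Prefix sum attached to a word of length `N`. -/
noncomputable def presum (t : ℕ → ℝ) {N : ℕ} (w : Fin N → Fin 2) : ℝ :=
  ∑ k : Fin N, ((w k : ℕ) : ℝ) * gseq t ((k : ℕ) + 1)

lemma Mavg_decomp (ht : IsLurothSeq t) (N : ℕ) (ε : ℕ → Fin 2) :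
    Mavg t ε = Mavg t (fun _ => 0) - presum t (fun k : Fin N => ε k)
      - Phi t N (fun k => ε (N + k)) := by
  rw [Mavg_eq_sub ht ε]
  have hsplit : Ssum t ε = presum t (fun k : Fin N => ε k) + Phi t N (fun k => ε (N + k)) := by
    unfold Ssum
    rw [← Summable.sum_add_tsum_nat_add N (summable_S ht ε)]
    congr 1
    · rw [presum, Finset.sum_range]
    · refine tsum_congr fun k => ?_
      have h1 : k + N = N + k := by omega
      rw [h1]
      have h2 : N + k + 1 = N + 1 + k := by omega
      rw [h2]
  rw [hsplit]
  ring

lemma cat_lt {N : ℕ} (w : Fin N → Fin 2) (η : ℕ → Fin 2) (k : ℕ) (hk : k < N) :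
    cat w η k = w ⟨k, hk⟩ := by
  unfold cat; rw [dif_pos hk]

lemma cat_shift {N : ℕ} (w : Fin N → Fin 2) (η : ℕ → Fin 2) :
    (fun k => cat w η (N + k)) = η := by
  funext k
  unfold cat
  rw [dif_neg (by omega)]
  congr 1
  omega

lemma calM_eq (ht : IsLurothSeq t) (N : ℕ) :
    calM t = ⋃ w : Fin N → Fin 2,
      (fun y => (Mavg t (fun _ => 0) - presum t w) - y) '' Tset t N := by
  ext x
  constructor
  · rintro ⟨ε, rfl⟩
    refine Set.mem_iUnion.2 ⟨fun k : Fin N => ε k, ?_⟩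
    exact ⟨Phi t N (fun k => ε (N + k)), ⟨_, rfl⟩, by rw [Mavg_decomp ht N ε]⟩
  · intro hx
    obtain ⟨w, y, ⟨η, rfl⟩, rfl⟩ := Set.mem_iUnion.1 hx
    refine ⟨cat w η, ?_⟩
    rw [Mavg_decomp ht N (cat w η), cat_shift w η]
    have hp : presum t (fun k : Fin N => cat w η k) = presum t w := by
      unfold presum
      refine Finset.sum_congr rfl fun k _ => ?_
      show ((cat w η (k:ℕ) : ℕ) : ℝ) * _ = _
      rw [cat_lt w η k k.2]
    rw [hp]

end Luroth
namespace Luroth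
open MeasureTheory Filter Topology
open scoped ENNReal NNReal

variable {t : ℕ → ℝ}

lemma Phi_continuous (ht : IsLurothSeq t) (N : ℕ) : Continuous (Phi t N) := by
  refine continuous_tsum (fun k => ?_) (summable_gt ht N) (fun k η => ?_)
  · exact ((continuous_of_discreteTopology (f := fun e : Fin 2 => ((e : ℕ) : ℝ))).comp
      (continuous_apply k)).mul continuous_const
  · have hg : 0 ≤ gseq t (N+1+k) := (gseq_pos ht _ (by omega)).le
    have h1 : ((η k : ℕ) : ℝ) ≤ 1 := by exact_mod_cast fin2_le (η k)
    rw [Real.norm_eq_abs, abs_of_nonneg (mul_nonneg (by positivity) hg)]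
    nlinarith

lemma Tset_compact (ht : IsLurothSeq t) (N : ℕ) : IsCompact (Tset t N) :=
  isCompact_range (Phi_continuous ht N)

lemma Mavg_continuous (ht : IsLurothSeq t) : Continuous (Mavg t) := by
  have h : Mavg t = fun ε => Mavg t (fun _ => 0) - Phi t 0 ε := by
    funext ε
    rw [Mavg_eq_sub ht ε, Ssum_eq_Phi0]
  rw [h]
  exact continuous_const.sub (Phi_continuous ht 0)

lemma calM_compact (ht : IsLurothSeq t) : IsCompact (calM t) :=
  isCompact_range (Mavg_continuous ht)

lemma Ssum_update (ht : IsLurothSeq t) (ε : ℕ → Fin 2) (m : ℕ) (e : Fin 2) :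
    Ssum t (Function.update ε m e) - Ssum t ε
      = (((e : ℕ) : ℝ) - ((ε m : ℕ) : ℝ)) * gseq t (m+1) := by
  unfold Ssum
  rw [← Summable.tsum_sub (summable_S ht (Function.update ε m e)) (summable_S ht ε)]
  rw [tsum_eq_single m ?_]
  · rw [Function.update_self]
    ring
  · intro k hk
    rw [Function.update_of_ne hk]
    ring

lemma calM_acc (ht : IsLurothSeq t) : ∀ x ∈ calM t, AccPt x (𝓟 (calM t)) := by
  rintro x ⟨ε, rfl⟩
  rw [accPt_iff_nhds]
  intro U hU
  obtain ⟨δ, hδ, hball⟩ := Metric.mem_nhds_iff.1 hU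
  have htend : Tendsto (fun m : ℕ => t (m+1)) atTop (nhds 0) :=
    ht.tendsto_zero.comp (tendsto_add_atTop_nat 1)
  obtain ⟨m, hm⟩ := (htend.eventually (gt_mem_nhds hδ)).exists
  set e : Fin 2 := if ε m = 0 then 1 else 0 with he
  set y := Mavg t (Function.update ε m e) with hy
  have hdiff : y - Mavg t ε = -((((e : ℕ) : ℝ) - ((ε m : ℕ) : ℝ)) * gseq t (m+1)) := by
    rw [hy, Mavg_eq_sub ht (Function.update ε m e), Mavg_eq_sub ht ε]
    have := Ssum_update ht ε m e
    linarith
  have habs : |y - Mavg t ε| = gseq t (m+1) := by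
    rw [hdiff, abs_neg, abs_mul]
    have h1 : |(((e : ℕ) : ℝ) - ((ε m : ℕ) : ℝ))| = 1 := by
      have h2 : ε m = 0 ∨ ε m = 1 := by omega
      rcases h2 with h | h <;> rw [he] <;> simp [h]
    rw [h1, one_mul, abs_of_pos (gseq_pos ht (m+1) (by omega))]
  refine ⟨y, ⟨?_, ⟨Function.update ε m e, rfl⟩⟩, ?_⟩
  · apply hball
    rw [Metric.mem_ball, Real.dist_eq, habs]
    have h3 := gseq_le_a ht (m+1) (by omega)
    have h4 := ht.pos (m+2) (by omega)
    have : m + 1 + 1 = m + 2 := rfl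
    rw [this] at h3
    linarith
  · intro hcontr
    rw [hcontr, sub_self, abs_zero] at habs
    exact absurd habs.symm (ne_of_gt (gseq_pos ht (m+1) (by omega)))

lemma interior_union_closed {X : Type*} [TopologicalSpace X] {A B : Set X} (hA : IsClosed A)
    (hAi : interior A = ∅) (hBi : interior B = ∅) : interior (A ∪ B) = ∅ := by
  have hsub : interior (A ∪ B) \ A ⊆ interior B := by
    refine interior_maximal ?_ (isOpen_interior.sdiff hA)
    rintro x ⟨hx1, hx2⟩
    rcases interior_subset hx1 with h | h
    · exact absurd h hx2
    · exact h
  have h1 : interior (A ∪ B) ⊆ A := by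
    intro x hx
    by_contra hxA
    have := hsub ⟨hx, hxA⟩
    rw [hBi] at this
    exact this
  have h2 : interior (A ∪ B) ⊆ interior A := interior_maximal h1 isOpen_interior
  rw [hAi] at h2
  exact Set.subset_empty_iff.1 h2

lemma interior_biUnion_empty {ι : Type*} [DecidableEq ι] (s : Finset ι) (f : ι → Set ℝ)
    (hc : ∀ i, IsClosed (f i)) (hi : ∀ i, interior (f i) = ∅) :
    interior (⋃ i ∈ s, f i) = ∅ := by
  induction s using Finset.induction with
  | empty => simp
  | @insert a s ha ih =>
    rw [Finset.set_biUnion_insert]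
    exact interior_union_closed (hc a) (hi a) ih

lemma interior_iUnion_empty {ι : Type*} [Fintype ι] [DecidableEq ι] (f : ι → Set ℝ)
    (hc : ∀ i, IsClosed (f i)) (hi : ∀ i, interior (f i) = ∅) :
    interior (⋃ i, f i) = ∅ := by
  have : (⋃ i, f i) = ⋃ i ∈ Finset.univ, f i := by simp
  rw [this]
  exact interior_biUnion_empty Finset.univ f hc hi

lemma interior_image_const_sub (c : ℝ) (S : Set ℝ) (hS : interior S = ∅) :
    interior ((fun y => c - y) '' S) = ∅ := by
  set h : Homeomorph ℝ ℝ := (Homeomorph.neg ℝ).trans (Homeomorph.addLeft c) with hh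
  have himg : (fun y => c - y) '' S = h '' S := by
    refine Set.image_congr fun y _ => ?_
    show c - y = c + (-y)
    ring
  rw [himg, ← Homeomorph.image_interior, hS, Set.image_empty]

lemma Tset_interior_empty (ht : IsLurothSeq t) {N : ℕ} (hG : ∀ n, N ≤ n → 0 < Gseq t n) :
    interior (Tset t N) = ∅ := by
  by_contra hne
  obtain ⟨x, hx⟩ := Set.nonempty_iff_ne_empty.2 hne
  obtain ⟨η, rfl⟩ := interior_subset hx
  obtain ⟨δ, hδ, hball⟩ := Metric.isOpen_iff.1 isOpen_interior _ hx
  have htz : Tendsto (fun n : ℕ => rtail t (N + n)) atTop (nhds 0) := by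
    have := (rtail_tendsto_zero ht).comp (tendsto_add_atTop_nat N)
    exact this.congr fun n => by simp [Nat.add_comm]
  obtain ⟨n, hn⟩ := (htz.eventually (gt_mem_nhds hδ)).exists
  set A := anchn t N η n with hA
  set y := A + (rtail t (N + n + 1) + gseq t (N + 1 + n)) / 2 with hy
  have hgap : rtail t (N + n + 1) < gseq t (N + 1 + n) := by
    have h := gap ht hG (N + n) (by omega)
    have hidx : N + 1 + n = N + n + 1 := by omega
    rw [hidx]
    exact h
  have hrp1 := rtail_pos ht (N + n + 1)
  have hsucc : rtail t (N+n) = gseq t (N+n+1) + rtail t (N+n+1) := rtail_succ ht (N+n)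
  have hgidx : gseq t (N+1+n) = gseq t (N+n+1) := by congr 1; omega
  have hx1 := Phi_mem_Icc ht N η n
  have hyT : y ∈ Tset t N := by
    apply interior_subset
    apply hball
    rw [Metric.mem_ball, Real.dist_eq, abs_lt]
    constructor
    · -- -δ < y - Phi η
      have : Phi t N η ≤ A + rtail t (N+n) := hx1.2
      rw [hy]
      have h0 : 0 < (rtail t (N + n + 1) + gseq t (N + 1 + n)) / 2 := by
        have := gseq_pos ht (N+1+n) (by omega)
        linarith
      nlinarith [hn, this, h0]
    · have : A ≤ Phi t N η := hx1.1
      rw [hy, hgidx]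
      nlinarith [hn, this, hrp1]
  obtain ⟨η', hyv⟩ := hyT
  by_cases hpre : ∃ k, k < n ∧ η' k ≠ η k
  · have hmem := Phi_mem_Icc ht N η' n
    rw [hyv] at hmem
    rcases anchn_sep' ht hG hpre with hsep | hsep
    · -- anchn η' + rtail < anchn η = A : y ≤ anchn η' + rtail < A but y > A
      have hylow : A < y := by
        rw [hy]
        have := gseq_pos ht (N+1+n) (by omega)
        linarith
      linarith [hmem.2]
    · -- A + rtail (N+n) < anchn η' ≤ y, but y ≤ A + rtail (N+n)
      have hyup : y ≤ A + rtail t (N+n) := by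
        rw [hy, hgidx, hsucc]
        linarith
      linarith [hmem.1]
  · push_neg at hpre
    have hanch : anchn t N η' n = A := by
      rw [hA]
      exact Finset.sum_congr rfl fun k hk => by rw [hpre k (Finset.mem_range.1 hk)]
    have hsplit := Phi_split ht N η' (n+1)
    rw [hyv] at hsplit
    have hstep : anchn t N η' (n+1) = A + ((η' n : ℕ) : ℝ) * gseq t (N+1+n) := by
      rw [anchn, Finset.sum_range_succ]
      have : (∑ k ∈ Finset.range n, ((η' k : ℕ) : ℝ) * gseq t (N + 1 + k)) = anchn t N η' n := rfl
      rw [this, hanch]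
    have htail0 := tail_nonneg ht N η' (n+1)
    have htail1 := tail_le ht N η' (n+1)
    have hc : η' n = 0 ∨ η' n = 1 := by omega
    rcases hc with hc | hc
    · rw [hc] at hstep
      simp only [Fin.val_zero, Nat.cast_zero, zero_mul, add_zero] at hstep
      have hyle : y ≤ A + rtail t (N+(n+1)) := by
        rw [hsplit, hstep]
        linarith
      have hidx2 : N + (n+1) = N + n + 1 := by omega
      rw [hidx2] at hyle
      rw [hy] at hyle
      linarith
    · rw [hc] at hstep
      simp only [Fin.val_one, Nat.cast_one, one_mul] at hstep
      have hyge : A + gseq t (N+1+n) ≤ y := by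
        rw [hsplit, hstep]
        linarith
      rw [hy] at hyge
      linarith

end Luroth
namespace Luroth
open MeasureTheory Filter Topology
open scoped ENNReal NNReal

/-- Normalized Haar measure on the Cantor group `ℕ → Fin 2`. -/
noncomputable def haarCG : Measure (ℕ → Fin 2) :=
  Measure.addHaarMeasure (⊤ : TopologicalSpace.PositiveCompacts (ℕ → Fin 2))

lemma haarCG_univ : haarCG Set.univ = 1 := by
  have := Measure.addHaarMeasure_self
    (K₀ := (⊤ : TopologicalSpace.PositiveCompacts (ℕ → Fin 2)))
  simpa [haarCG] using this

/-- Cylinder set given by a word. -/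
def cylW {n : ℕ} (w : Fin n → Fin 2) : Set (ℕ → Fin 2) := {σ | ∀ k : Fin n, σ (k : ℕ) = w k}

lemma cylW_measurable {n : ℕ} (w : Fin n → Fin 2) : MeasurableSet (cylW w) := by
  have h : cylW w = ⋂ k : Fin n, {σ : ℕ → Fin 2 | σ (k : ℕ) = w k} := by
    ext σ; simp [cylW, Set.mem_iInter]
  rw [h]
  refine MeasurableSet.iInter fun k => ?_
  have h2 : {σ : ℕ → Fin 2 | σ (k : ℕ) = w k} = (fun σ : ℕ → Fin 2 => σ (k : ℕ)) ⁻¹' {w k} := rfl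
  rw [h2]
  exact (measurable_pi_apply (k : ℕ)) (MeasurableSet.singleton (w k))

lemma cylW_disjoint {n : ℕ} {w w' : Fin n → Fin 2} (h : w ≠ w') :
    Disjoint (cylW w) (cylW w') := by
  rw [Set.disjoint_left]
  intro σ h1 h2
  exact h (funext fun k => (h1 k).symm.trans (h2 k))

lemma cylW_cover (n : ℕ) : ⋃ w : Fin n → Fin 2, cylW w = Set.univ := by
  ext σ
  simp only [Set.mem_iUnion, Set.mem_univ, iff_true]
  exact ⟨fun k => σ (k : ℕ), fun k => rfl⟩

lemma haarCG_cylW_eq {n : ℕ} (w w' : Fin n → Fin 2) :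
    haarCG (cylW w) = haarCG (cylW w') := by
  haveI : haarCG.IsAddLeftInvariant :=
    (Measure.isAddHaarMeasure_addHaarMeasure
      (⊤ : TopologicalSpace.PositiveCompacts (ℕ → Fin 2))).toIsAddLeftInvariant
  set d : ℕ → Fin 2 := fun k => if h : k < n then w ⟨k, h⟩ - w' ⟨k, h⟩ else 0 with hd
  have hpre : (fun σ : ℕ → Fin 2 => d + σ) ⁻¹' cylW w = cylW w' := by
    ext σ
    simp only [Set.mem_preimage, cylW, Set.mem_setOf_eq, Pi.add_apply]
    constructor
    · intro h k
      have h2 : d (k : ℕ) = w ⟨(k : ℕ), k.2⟩ - w' ⟨(k : ℕ), k.2⟩ := by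
        rw [hd]; simp [dif_pos k.2]
      have h3 : (⟨(k : ℕ), k.2⟩ : Fin n) = k := rfl
      have h4 : (w k - w' k) + σ (k : ℕ) = w k := by
        have h5 := h k
        rw [h2, h3] at h5
        exact h5
      have h5 : σ (k : ℕ) = w k - (w k - w' k) := by
        rw [eq_sub_iff_add_eq, add_comm]
        exact h4
      rw [h5, sub_sub_cancel]
    · intro h k
      have h2 : d (k : ℕ) = w ⟨(k : ℕ), k.2⟩ - w' ⟨(k : ℕ), k.2⟩ := by
        rw [hd]; simp [dif_pos k.2]
      have h3 : (⟨(k : ℕ), k.2⟩ : Fin n) = k := rfl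
      rw [h2, h3, h k]
      exact sub_add_cancel (w k) (w' k)
  have hfin : haarCG (cylW w') = haarCG (cylW w) := by
    calc haarCG (cylW w') = haarCG ((fun σ : ℕ → Fin 2 => d + σ) ⁻¹' cylW w) := by rw [hpre]
    _ = haarCG (cylW w) := measure_preimage_add haarCG d (cylW w)
  exact hfin.symm

lemma haarCG_cylW {n : ℕ} (w : Fin n → Fin 2) :
    haarCG (cylW w) = ((2 : ℝ≥0∞) ^ n)⁻¹ := by
  have hsum : ∑ w' : Fin n → Fin 2, haarCG (cylW w') = 1 := by
    rw [← haarCG_univ, ← cylW_cover n]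
    rw [measure_iUnion (fun a b hab => cylW_disjoint hab) (fun w' => cylW_measurable w')]
    exact (tsum_fintype _).symm
  have hconst : ∑ w' : Fin n → Fin 2, haarCG (cylW w')
      = (Fintype.card (Fin n → Fin 2)) * haarCG (cylW w) := by
    rw [Finset.sum_congr rfl (fun w' _ => haarCG_cylW_eq w' w)]
    rw [Finset.sum_const, Finset.card_univ, nsmul_eq_mul]
  have hcard : (Fintype.card (Fin n → Fin 2)) = 2^n := by
    simp [Fintype.card_fun]
  rw [hconst, hcard] at hsum
  have h2 : ((2:ℝ≥0∞)^n) ≠ 0 := by positivity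
  have h3 : ((2:ℝ≥0∞)^n) ≠ ⊤ := by
    exact ENNReal.pow_ne_top (by norm_num)
  have := congrArg (fun x => ((2:ℝ≥0∞)^n)⁻¹ * x) hsum
  rw [← mul_assoc] at this
  rw [show ((2:ℝ≥0∞)^n : ℝ≥0∞)⁻¹ * ((2:ℕ)^n : ℕ) = 1 from ?_, one_mul, mul_one] at this
  · exact this
  · push_cast
    exact ENNReal.inv_mul_cancel h2 h3

end Luroth
namespace Luroth
open MeasureTheory Filter Topology
open scoped ENNReal NNReal

variable {t : ℕ → ℝ}

/-- The dimension comparison sequence. -/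
noncomputable def fdim (t : ℕ → ℝ) (k : ℕ) : ℝ :=
  ((k : ℝ) * Real.log 2) / (- Real.log (rtail t k))

lemma rtail_decay (ht : IsLurothSeq t) {N : ℕ} (hG : ∀ n, N ≤ n → 0 < Gseq t n) :
    ∀ m, rtail t (N + m) ≤ rtail t N / 2 ^ m := by
  intro m
  induction m with
  | zero => simp
  | succ m ih =>
    have hgap := gap ht hG (N + m) (by omega)
    have hsucc := rtail_succ ht (N + m)
    have h2 : N + (m+1) = N + m + 1 := by omega
    rw [h2]
    have h3 : rtail t (N+m+1) ≤ rtail t (N+m) / 2 := by linarith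
    calc rtail t (N+m+1) ≤ rtail t (N+m)/2 := h3
    _ ≤ (rtail t N / 2^m)/2 := by linarith
    _ = rtail t N / 2^(m+1) := by rw [pow_succ]; ring

lemma rtail_le_one (ht : IsLurothSeq t) (k : ℕ) : rtail t k ≤ 1 :=
  le_trans (rtail_le_t ht k) (t_le_one ht (k+1) (by omega))

lemma ev_rtail_lt_one (ht : IsLurothSeq t) : ∀ᶠ k in atTop, rtail t k < 1 :=
  (rtail_tendsto_zero ht).eventually (gt_mem_nhds one_pos)

lemma ev_neglog_pos (ht : IsLurothSeq t) : ∀ᶠ k in atTop, 0 < - Real.log (rtail t k) := by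
  filter_upwards [ev_rtail_lt_one ht] with k hk
  have := Real.log_neg (rtail_pos ht k) hk
  linarith

lemma fdim_ev_nonneg (ht : IsLurothSeq t) : ∀ᶠ k in atTop, 0 ≤ fdim t k := by
  filter_upwards [ev_neglog_pos ht] with k hk
  exact div_nonneg (by positivity) hk.le

lemma neglog_ge (ht : IsLurothSeq t) {N : ℕ} (hG : ∀ n, N ≤ n → 0 < Gseq t n) :
    ∀ k, N ≤ k → ((k:ℝ) - N) * Real.log 2 - Real.log (rtail t N) ≤ - Real.log (rtail t k) := by
  intro k hk
  have h1 : rtail t k ≤ rtail t N / 2 ^ (k - N) := by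
    have h := rtail_decay ht hG (k - N)
    rw [show N + (k - N) = k by omega] at h
    exact h
  have h2 := Real.log_le_log (rtail_pos ht k) h1
  rw [Real.log_div (ne_of_gt (rtail_pos ht N)) (by positivity), Real.log_pow] at h2
  have h3 : ((k - N : ℕ) : ℝ) = (k:ℝ) - N := by
    push_cast [hk]
    ring
  rw [h3] at h2
  linarith

lemma fdim_ev_le (ht : IsLurothSeq t) {N : ℕ} (hG : ∀ n, N ≤ n → 0 < Gseq t n) :
    ∀ᶠ k in atTop, fdim t k ≤ 2 := by
  have hl2 : 0 < Real.log 2 := Real.log_pos (by norm_num)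
  have hev : ∀ᶠ k : ℕ in atTop,
      (2*(N:ℝ) + 2 * |Real.log (rtail t N)| / Real.log 2) ≤ (k:ℝ) :=
    tendsto_natCast_atTop_atTop.eventually_ge_atTop _
  filter_upwards [hev, eventually_ge_atTop N, eventually_ge_atTop 1] with k hk1 hk2 hk3
  unfold fdim
  have hD : ((k:ℝ) - N) * Real.log 2 - Real.log (rtail t N) ≤ - Real.log (rtail t k) :=
    neglog_ge ht hG k hk2
  have habs : Real.log (rtail t N) ≤ |Real.log (rtail t N)| := le_abs_self _
  have habs2 : 0 ≤ |Real.log (rtail t N)| := abs_nonneg _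
  have hk1' : 2*(N:ℝ) * Real.log 2 + 2 * |Real.log (rtail t N)| ≤ (k:ℝ) * Real.log 2 := by
    have h5 : (2*(N:ℝ) + 2 * |Real.log (rtail t N)| / Real.log 2) * Real.log 2
        ≤ (k:ℝ) * Real.log 2 := mul_le_mul_of_nonneg_right hk1 hl2.le
    have h6 : (2*(N:ℝ) + 2 * |Real.log (rtail t N)| / Real.log 2) * Real.log 2
        = 2*(N:ℝ)*Real.log 2 + 2*|Real.log (rtail t N)| := by
      field_simp
    linarith [h6 ▸ h5]
  have hD2 : (k:ℝ) * Real.log 2 / 2 ≤ - Real.log (rtail t k) := by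
    nlinarith
  have hDpos : 0 < - Real.log (rtail t k) := by
    have hkpos : (1:ℝ) ≤ (k:ℝ) := by exact_mod_cast hk3
    nlinarith
  rw [div_le_iff₀ hDpos]
  linarith

lemma coboundedf (ht : IsLurothSeq t) {N : ℕ} (hG : ∀ n, N ≤ n → 0 < Gseq t n) :
    IsCoboundedUnder (· ≥ ·) atTop (fdim t) :=
  isCoboundedUnder_ge_of_eventually_le atTop (fdim_ev_le ht hG)

lemma boundedf (ht : IsLurothSeq t) : IsBoundedUnder (· ≥ ·) atTop (fdim t) :=
  isBoundedUnder_of_eventually_ge (fdim_ev_nonneg ht)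

/-- Covering interval for a word. -/
noncomputable def Itv (t : ℕ → ℝ) (N : ℕ) (n : ℕ) (w : Fin n → Fin 2) : Set ℝ :=
  Set.Icc (anchn t N (cat w (fun _ => 0)) n) (anchn t N (cat w (fun _ => 0)) n + rtail t (N+n))

lemma Tset_subset_Itv (ht : IsLurothSeq t) (N n : ℕ) :
    Tset t N ⊆ ⋃ w : Fin n → Fin 2, Itv t N n w := by
  rintro _ ⟨η, rfl⟩
  refine Set.mem_iUnion.2 ⟨fun k : Fin n => η k, ?_⟩
  have h : anchn t N (cat (fun k : Fin n => η k) (fun _ => 0)) n = anchn t N η n := by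
    refine Finset.sum_congr rfl fun k hk => ?_
    have hkn := Finset.mem_range.1 hk
    rw [cat_lt _ _ k hkn]
  unfold Itv
  rw [h]
  exact Phi_mem_Icc ht N η n

lemma Itv_diam (ht : IsLurothSeq t) (N n : ℕ) (w : Fin n → Fin 2) :
    EMetric.diam (Itv t N n w) = ENNReal.ofReal (rtail t (N+n)) := by
  unfold Itv
  rw [EMetric.diam, Real.ediam_Icc]
  congr 1
  ring

lemma dimH_Tset_le (ht : IsLurothSeq t) {N : ℕ} (hG : ∀ n, N ≤ n → 0 < Gseq t n) :
    dimH (Tset t N) ≤ ENNReal.ofReal (liminf (fdim t) atTop) := by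
  refine dimH_le fun d hd => ?_
  by_contra hlt
  push_neg at hlt
  have hLd : liminf (fdim t) atTop < (d:ℝ) := by
    by_contra hc
    push_neg at hc
    have h2 : (d : ℝ≥0∞) ≤ ENNReal.ofReal (liminf (fdim t) atTop) := by
      rw [← ENNReal.ofReal_coe_nnreal]
      exact ENNReal.ofReal_le_ofReal hc
    exact absurd h2 (not_le.2 hlt)
  obtain ⟨d₂, hd₂1, hd₂2⟩ := exists_between hLd
  -- the Hausdorff measure is bounded by the liminf of covering sums
  have htz : Tendsto (fun n : ℕ => rtail t (N + n)) atTop (nhds 0) := by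
    have h := (rtail_tendsto_zero ht).comp (tendsto_add_atTop_nat N)
    exact h.congr fun n => by simp [Nat.add_comm]
  have hr : Tendsto (fun n : ℕ => ENNReal.ofReal (rtail t (N + n))) atTop (nhds 0) := by
    have h := ENNReal.tendsto_ofReal htz
    rwa [ENNReal.ofReal_zero] at h
  have hμ := Measure.hausdorffMeasure_le_liminf_sum (d:ℝ) (Tset t N)
    (fun n : ℕ => ENNReal.ofReal (rtail t (N + n))) hr (Itv t N)
    (Eventually.of_forall fun n w => le_of_eq (Itv_diam ht N n w))
    (Eventually.of_forall fun n => Tset_subset_Itv ht N n)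
  have hsumeq : ∀ n : ℕ, (∑ w : Fin n → Fin 2, EMetric.diam (Itv t N n w) ^ (d:ℝ))
      = (2:ℝ≥0∞)^n * ENNReal.ofReal (rtail t (N+n)) ^ (d:ℝ) := by
    intro n
    rw [Finset.sum_congr rfl (fun w _ => by rw [Itv_diam ht N n w])]
    rw [Finset.sum_const, Finset.card_univ]
    have hcard : (Fintype.card (Fin n → Fin 2)) = 2^n := by simp [Fintype.card_fun]
    rw [hcard, nsmul_eq_mul]
    push_cast
    ring
  -- frequently the covering sums are at most 1
  have hfreq0 : ∃ᶠ k in atTop, fdim t k < d₂ :=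
    frequently_lt_of_liminf_lt (coboundedf ht hG) hd₂1
  have hcore : ∀ k, N ≤ k → 0 < - Real.log (rtail t k) → fdim t k < d₂ →
      (2:ℝ≥0∞)^(k - N) * ENNReal.ofReal (rtail t (N+(k-N))) ^ (d:ℝ) ≤ 1 := by
    intro k hkN hlog hfd
    have hr0 : 0 < rtail t k := rtail_pos ht k
    have hr1 : rtail t k ≤ 1 := rtail_le_one ht k
    have hklog : (k:ℝ) * Real.log 2 < d₂ * (- Real.log (rtail t k)) := by
      unfold fdim at hfd
      rw [div_lt_iff₀ hlog] at hfd
      linarith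
    have hrp : rtail t k ^ (d₂:ℝ) < (2:ℝ) ^ (-(k:ℝ)) := by
      rw [Real.rpow_def_of_pos hr0, Real.rpow_def_of_pos (by norm_num : (0:ℝ) < 2)]
      apply Real.exp_lt_exp.2
      nlinarith
    have hNn : N + (k - N) = k := by omega
    rw [hNn]
    have step1 : ENNReal.ofReal (rtail t k) ^ (d:ℝ) ≤ ENNReal.ofReal (rtail t k) ^ (d₂:ℝ) := by
      refine ENNReal.rpow_le_rpow_of_exponent_ge ?_ hd₂2.le
      exact ENNReal.ofReal_le_one.2 hr1
    have step2 : ENNReal.ofReal (rtail t k) ^ (d₂:ℝ) = ENNReal.ofReal (rtail t k ^ (d₂:ℝ)) :=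
      ENNReal.ofReal_rpow_of_pos hr0
    have step3 : ENNReal.ofReal (rtail t k ^ (d₂:ℝ)) ≤ ENNReal.ofReal ((2:ℝ)^(-(k:ℝ))) :=
      ENNReal.ofReal_le_ofReal hrp.le
    have step4 : (2:ℝ≥0∞)^(k-N) = ENNReal.ofReal ((2:ℝ)^(k-N : ℕ)) := by
      rw [ENNReal.ofReal_pow (by norm_num)]
      norm_num
    calc (2:ℝ≥0∞)^(k-N) * ENNReal.ofReal (rtail t k) ^ (d:ℝ)
        ≤ (2:ℝ≥0∞)^(k-N) * ENNReal.ofReal ((2:ℝ)^(-(k:ℝ))) := by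
          refine mul_le_mul_right (le_trans step1 (le_trans (le_of_eq step2) step3)) _
      _ = ENNReal.ofReal ((2:ℝ)^(k-N : ℕ) * (2:ℝ)^(-(k:ℝ))) := by
          rw [ENNReal.ofReal_mul (by positivity), ← step4]
      _ ≤ 1 := by
          rw [ENNReal.ofReal_le_one]
          have he : (2:ℝ)^(k-N : ℕ) * (2:ℝ)^(-(k:ℝ)) = (2:ℝ) ^ (((k-N : ℕ):ℝ) - (k:ℝ)) := by
            rw [← Real.rpow_natCast 2 (k-N), ← Real.rpow_add (by norm_num : (0:ℝ) < 2)]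
            ring_nf
          rw [he]
          apply Real.rpow_le_one_of_one_le_of_nonpos (by norm_num)
          have : ((k - N : ℕ):ℝ) ≤ (k:ℝ) := by
            exact_mod_cast Nat.sub_le k N
          linarith
  have hfreq : ∃ᶠ n in atTop,
      (2:ℝ≥0∞)^n * ENNReal.ofReal (rtail t (N+n)) ^ (d:ℝ) ≤ 1 := by
    rw [frequently_atTop]
    intro n₀
    have hcomb := (hfreq0.and_eventually ((ev_neglog_pos ht).and
      (eventually_ge_atTop (max N (n₀ + N))))).exists
    obtain ⟨k, hk1, hk2, hk3⟩ := hcomb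
    refine ⟨k - N, by omega, ?_⟩
    exact hcore k (le_trans (le_max_left _ _) hk3) hk2 hk1
  have hle1 : liminf (fun n : ℕ => ∑ w : Fin n → Fin 2, EMetric.diam (Itv t N n w) ^ (d:ℝ))
      atTop ≤ 1 := by
    refine liminf_le_of_frequently_le' ?_
    exact hfreq.mono fun n hn => by rw [hsumeq n]; exact hn
  rw [hd] at hμ
  exact absurd (le_trans hμ hle1) (by simp)

end Luroth
namespace Luroth
open MeasureTheory Filter Topology
open scoped ENNReal NNReal

variable {t : ℕ → ℝ}

/-- The push-forward of the Haar measure under the coding map. -/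
noncomputable def muT (t : ℕ → ℝ) (N : ℕ) : Measure ℝ := Measure.map (Phi t N) haarCG

lemma muT_apply (ht : IsLurothSeq t) (N : ℕ) {s : Set ℝ} (hs : MeasurableSet s) :
    muT t N s = haarCG (Phi t N ⁻¹' s) :=
  Measure.map_apply (Phi_continuous ht N).measurable hs

lemma muT_Tset (ht : IsLurothSeq t) (N : ℕ) : muT t N (Tset t N) = 1 := by
  rw [muT_apply ht N ((Tset_compact ht N).isClosed.measurableSet)]
  have : Phi t N ⁻¹' (Tset t N) = Set.univ := by
    rw [Tset]
    exact Set.preimage_range _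
  rw [this, haarCG_univ]

lemma anchn_cat (η : ℕ → Fin 2) (m : ℕ) (N : ℕ) :
    anchn t N (cat (fun k : Fin m => η k) (fun _ => 0)) m = anchn t N η m := by
  refine Finset.sum_congr rfl fun k hk => ?_
  rw [cat_lt _ _ k (Finset.mem_range.1 hk)]

lemma word_diff {m : ℕ} {w w' : Fin m → Fin 2} (h : w ≠ w') :
    ∃ k, k < m ∧ cat w (fun _ => (0:Fin 2)) k ≠ cat w' (fun _ => (0:Fin 2)) k := by
  by_contra hc
  push_neg at hc
  refine h (funext fun k => ?_)
  have := hc (k : ℕ) k.2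
  rwa [cat_lt _ _ _ k.2, cat_lt _ _ _ k.2] at this

/-- Counting: an interval of length less than `rtail (N+m)` meets at most two
level-`m` cylinder intervals. -/
lemma count_words (ht : IsLurothSeq t) {N : ℕ} (hG : ∀ n, N ≤ n → 0 < Gseq t n)
    (m : ℕ) (x₀ r : ℝ) (hr0 : 0 ≤ r) (hr : 2*r < rtail t (N+m)) :
    haarCG (Phi t N ⁻¹' (Set.Icc (x₀ - r) (x₀ + r))) ≤ 2 * ((2:ℝ≥0∞)^m)⁻¹ := by
  classical
  set J := Set.Icc (x₀ - r) (x₀ + r) with hJ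
  set W : Finset (Fin m → Fin 2) :=
    Finset.univ.filter (fun w => (Itv t N m w ∩ J).Nonempty) with hW
  have hsub : Phi t N ⁻¹' J ⊆ ⋃ w ∈ W, cylW w := by
    intro η hη
    have hmem : Phi t N η ∈ Itv t N m (fun k : Fin m => η k) := by
      unfold Itv
      rw [anchn_cat η m N]
      exact Phi_mem_Icc ht N η m
    have hWmem : (fun k : Fin m => η k) ∈ W :=
      Finset.mem_filter.2 ⟨Finset.mem_univ _, ⟨Phi t N η, hmem, hη⟩⟩
    exact Set.mem_biUnion hWmem (fun k : Fin m => rfl)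
  have hcard : W.card ≤ 2 := by
    by_contra hc
    push_neg at hc
    obtain ⟨w1, hw1, w2, hw2, w3, hw3, h12, h13, h23⟩ := Finset.two_lt_card.1 hc
    set ρ := rtail t (N+m) with hρ
    have hmemf : ∀ w ∈ W, ∃ x, anchn t N (cat w (fun _ => 0)) m ≤ x ∧
        x ≤ anchn t N (cat w (fun _ => 0)) m + ρ ∧ x₀ - r ≤ x ∧ x ≤ x₀ + r := by
      intro w hw
      rw [hW, Finset.mem_filter] at hw
      obtain ⟨x, hx1, hx2⟩ := hw.2
      unfold Itv at hx1
      exact ⟨x, hx1.1, hx1.2, hx2.1, hx2.2⟩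
    obtain ⟨x1, ha1, hb1, hc1, hd1⟩ := hmemf w1 hw1
    obtain ⟨x2, ha2, hb2, hc2, hd2⟩ := hmemf w2 hw2
    obtain ⟨x3, ha3, hb3, hc3, hd3⟩ := hmemf w3 hw3
    set A1 := anchn t N (cat w1 (fun _ => 0)) m
    set A2 := anchn t N (cat w2 (fun _ => 0)) m
    set A3 := anchn t N (cat w3 (fun _ => 0)) m
    have hsep : ∀ {wa wb : Fin m → Fin 2}, wa ≠ wb →
        anchn t N (cat wa (fun _ => 0)) m + ρ < anchn t N (cat wb (fun _ => 0)) m ∨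
        anchn t N (cat wb (fun _ => 0)) m + ρ < anchn t N (cat wa (fun _ => 0)) m := by
      intro wa wb hab
      have hd := word_diff hab
      exact anchn_sep' ht hG hd
    rcases hsep h12 with h | h <;> rcases hsep h13 with h' | h' <;>
      rcases hsep h23 with h'' | h'' <;> linarith
  calc haarCG (Phi t N ⁻¹' J) ≤ haarCG (⋃ w ∈ W, cylW w) := measure_mono hsub
  _ ≤ ∑ w ∈ W, haarCG (cylW w) := measure_biUnion_finset_le W _
  _ = W.card * ((2:ℝ≥0∞)^m)⁻¹ := by
      rw [Finset.sum_congr rfl (fun w _ => haarCG_cylW w), Finset.sum_const, nsmul_eq_mul]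
  _ ≤ 2 * ((2:ℝ≥0∞)^m)⁻¹ := by
      refine mul_le_mul_left ?_ _
      exact_mod_cast Nat.cast_le.2 hcard

end Luroth
namespace Luroth
open MeasureTheory Filter Topology
open scoped ENNReal NNReal

variable {t : ℕ → ℝ}

lemma rtail_anti (ht : IsLurothSeq t) {a b : ℕ} (h : a ≤ b) : rtail t b ≤ rtail t a := by
  rcases eq_or_lt_of_le h with rfl | h
  · exact le_rfl
  · exact (rtail_strict_anti ht h).le

lemma rtail_half (ht : IsLurothSeq t) {N : ℕ} (hG : ∀ n, N ≤ n → 0 < Gseq t n)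
    (n : ℕ) (hn : N ≤ n) : 2 * rtail t (n+1) < rtail t n := by
  have h1 := gap ht hG n hn
  have h2 := rtail_succ ht n
  linarith

lemma ofReal_two_rpow_neg (k : ℕ) :
    ENNReal.ofReal ((2:ℝ) ^ (-((k:ℕ):ℝ))) = ((2:ℝ≥0∞)^k)⁻¹ := by
  rw [Real.rpow_neg (by norm_num : (0:ℝ) ≤ 2), Real.rpow_natCast,
    ENNReal.ofReal_inv_of_pos (by positivity), ENNReal.ofReal_pow (by norm_num)]
  norm_num

lemma pow_id_ennreal (N m : ℕ) :
    (2:ℝ≥0∞)^(N+2) * ((2:ℝ≥0∞)^(N+m+1))⁻¹ = 2 * ((2:ℝ≥0∞)^m)⁻¹ := by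
  have hne0 : ((2:ℝ≥0∞)^(N+1)) ≠ 0 := by positivity
  have hnetop : ((2:ℝ≥0∞)^(N+1)) ≠ ⊤ := ENNReal.pow_ne_top (by norm_num)
  have hid : (2:ℝ≥0∞)^(N+m+1) = 2^(N+1) * 2^m := by
    rw [← pow_add]; congr 1; omega
  rw [hid, ENNReal.mul_inv (Or.inl hne0) (Or.inl (ENNReal.pow_ne_top (by norm_num)))]
  rw [show (2:ℝ≥0∞)^(N+2) = 2^(N+1) * 2 by rw [pow_succ]]
  calc (2:ℝ≥0∞)^(N+1) * 2 * (((2:ℝ≥0∞)^(N+1))⁻¹ * ((2:ℝ≥0∞)^m)⁻¹)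
      = ((2:ℝ≥0∞)^(N+1) * ((2:ℝ≥0∞)^(N+1))⁻¹) * (2 * ((2:ℝ≥0∞)^m)⁻¹) := by ring
  _ = 2 * ((2:ℝ≥0∞)^m)⁻¹ := by rw [ENNReal.mul_inv_cancel hne0 hnetop, one_mul]

lemma le_dimH_Tset (ht : IsLurothSeq t) {N : ℕ} (hG : ∀ n, N ≤ n → 0 < Gseq t n)
    {d : ℝ≥0} (hd : (d:ℝ) < liminf (fdim t) atTop) : (d : ℝ≥0∞) ≤ dimH (Tset t N) := by
  have hev : ∀ᶠ k in atTop, (d:ℝ) < fdim t k := eventually_lt_of_lt_liminf hd (boundedf ht)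
  obtain ⟨m₀, hm₀⟩ := eventually_atTop.1 (hev.and (ev_neglog_pos ht))
  have hkey : ∀ k, m₀ ≤ k → (2:ℝ)^(-((k:ℕ):ℝ)) ≤ rtail t k ^ (d:ℝ) := by
    intro k hk
    obtain ⟨hfd, hlog⟩ := hm₀ k hk
    have hr0 := rtail_pos ht k
    have h1 : (d:ℝ) * (- Real.log (rtail t k)) < (k:ℝ) * Real.log 2 := by
      unfold fdim at hfd
      rw [lt_div_iff₀ hlog] at hfd
      linarith
    rw [Real.rpow_def_of_pos hr0, Real.rpow_def_of_pos (by norm_num : (0:ℝ) < 2)]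
    apply Real.exp_le_exp.2
    nlinarith
  set ε₀ := rtail t (N + m₀ + 1) with hε₀
  have hε₀pos : 0 < ε₀ := rtail_pos ht _
  set C : ℝ≥0∞ := 2^(N+2) * ENNReal.ofReal ((2:ℝ) ^ (d:ℝ)) with hC
  have hC0 : C ≠ 0 := by
    rw [hC]
    refine mul_ne_zero (by positivity) ?_
    simp only [ne_eq, ENNReal.ofReal_eq_zero, not_le]
    positivity
  have hCtop : C ≠ ⊤ := by
    rw [hC]
    exact ENNReal.mul_ne_top (ENNReal.pow_ne_top (by norm_num)) ENNReal.ofReal_ne_top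
  have hmass : ∀ s : Set ℝ, EMetric.diam s ≤ ENNReal.ofReal ε₀ →
      muT t N s ≤ C * EMetric.diam s ^ ((d:ℝ≥0∞).toReal) := by
    intro s hs
    rcases Set.eq_empty_or_nonempty s with rfl | ⟨x₀, hx₀⟩
    · simp
    have hdne : EMetric.diam s ≠ ⊤ := ne_top_of_le_ne_top ENNReal.ofReal_ne_top hs
    set r := (EMetric.diam s).toReal with hr
    have hr0 : 0 ≤ r := ENNReal.toReal_nonneg
    have hrs : r ≤ ε₀ := by
      have h := ENNReal.toReal_mono ENNReal.ofReal_ne_top hs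
      rwa [ENNReal.toReal_ofReal hε₀pos.le] at h
    have hsJ : s ⊆ Set.Icc (x₀ - r) (x₀ + r) := by
      intro y hy
      have hed : edist y x₀ ≤ EMetric.diam s := EMetric.edist_le_diam_of_mem hy hx₀
      have hdist : dist y x₀ ≤ r := by
        rw [dist_edist]
        exact ENNReal.toReal_mono hdne hed
      rw [Real.dist_eq] at hdist
      have habs := abs_le.1 hdist
      exact ⟨by linarith [habs.1], by linarith [habs.2]⟩
    have hcount : ∀ m : ℕ, 2*r < rtail t (N+m) → muT t N s ≤ 2 * ((2:ℝ≥0∞)^m)⁻¹ := by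
      intro m hm
      calc muT t N s ≤ muT t N (Set.Icc (x₀ - r) (x₀ + r)) := measure_mono hsJ
      _ = haarCG (Phi t N ⁻¹' (Set.Icc (x₀ - r) (x₀ + r))) := muT_apply ht N measurableSet_Icc
      _ ≤ 2 * ((2:ℝ≥0∞)^m)⁻¹ := count_words ht hG m x₀ r hr0 hm
    have hdiam_eq : EMetric.diam s = ENNReal.ofReal r := (ENNReal.ofReal_toReal hdne).symm
    rcases eq_or_lt_of_le hr0 with hr0' | hrpos
    · -- zero diameter
      have hzero : muT t N s = 0 := by
        have hb : ∀ᶠ m : ℕ in atTop, muT t N s ≤ 2 * ((2:ℝ≥0∞)^m)⁻¹ := by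
          refine Eventually.of_forall fun m => hcount m ?_
          rw [← hr0']
          simpa using rtail_pos ht (N+m)
        have htd : Tendsto (fun m : ℕ => 2 * ((2:ℝ≥0∞)^m)⁻¹) atTop (nhds 0) := by
          have h1 : Tendsto (fun m : ℕ => ((2:ℝ≥0∞)⁻¹)^m) atTop (nhds 0) :=
            ENNReal.tendsto_pow_atTop_nhds_zero_of_lt_one
              (by simp [ENNReal.inv_lt_one])
          have h2 : Tendsto (fun m : ℕ => ((2:ℝ≥0∞)^m)⁻¹) atTop (nhds 0) := by
            refine h1.congr fun m => ?_
            rw [ENNReal.inv_pow]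
          have := ENNReal.Tendsto.const_mul h2 (Or.inr (by norm_num : (2:ℝ≥0∞) ≠ ⊤))
          simpa using this
        have hle := ge_of_tendsto htd hb
        exact le_antisymm (by simpa using hle) (zero_le)
      rw [hzero]
      exact zero_le
    · -- positive diameter
      have hex : ∃ j, rtail t (N+j) ≤ 2*r := by
        have htz : Tendsto (fun j : ℕ => rtail t (N + j)) atTop (nhds 0) := by
          have h := (rtail_tendsto_zero ht).comp (tendsto_add_atTop_nat N)
          exact h.congr fun n => by simp [Nat.add_comm]
        obtain ⟨j, hj⟩ := (htz.eventually (gt_mem_nhds (by positivity : (0:ℝ) < 2*r))).exists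
        exact ⟨j, hj.le⟩
      set j₀ := Nat.find hex with hj₀
      have hj₀spec : rtail t (N+j₀) ≤ 2*r := Nat.find_spec hex
      have hj₀gt : m₀ + 1 ≤ j₀ := by
        by_contra hcl
        push_neg at hcl
        have h2 : rtail t (N+m₀) ≤ rtail t (N+j₀) := rtail_anti ht (by omega)
        have h3 : 2 * rtail t (N+m₀+1) < rtail t (N+m₀) := rtail_half ht hG (N+m₀) (by omega)
        have h4 : rtail t (N + m₀ + 1) = ε₀ := rfl
        linarith
      set m := j₀ - 1 with hm
      have hmm₀ : m₀ ≤ m := by omega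
      have hrlt : 2*r < rtail t (N+m) := by
        have h := Nat.find_min hex (by omega : m < j₀)
        push_neg at h
        exact h
      have hrle : rtail t (N+m+1) ≤ 2*r := by
        rw [show N+m+1 = N+j₀ by omega]
        exact hj₀spec
      have hmuJ : muT t N s ≤ 2 * ((2:ℝ≥0∞)^m)⁻¹ := hcount m hrlt
      -- convert
      have hstep1 : (2:ℝ≥0∞) * ((2:ℝ≥0∞)^m)⁻¹
          = 2^(N+2) * ENNReal.ofReal ((2:ℝ)^(-(((N+m+1:ℕ)):ℝ))) := by
        rw [ofReal_two_rpow_neg (N+m+1), pow_id_ennreal N m]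
      have hstep2 : ENNReal.ofReal ((2:ℝ)^(-(((N+m+1:ℕ)):ℝ)))
          ≤ ENNReal.ofReal (rtail t (N+m+1) ^ (d:ℝ)) :=
        ENNReal.ofReal_le_ofReal (hkey (N+m+1) (by omega))
      have hstep3 : rtail t (N+m+1) ^ (d:ℝ) ≤ (2*r) ^ (d:ℝ) :=
        Real.rpow_le_rpow (rtail_pos ht _).le hrle d.2
      have hstep4 : (2*r) ^ (d:ℝ) = (2:ℝ)^(d:ℝ) * r^(d:ℝ) :=
        Real.mul_rpow (by norm_num) hr0
      have hfinal : muT t N s ≤ C * ENNReal.ofReal (r ^ (d:ℝ)) := by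
        calc muT t N s ≤ 2 * ((2:ℝ≥0∞)^m)⁻¹ := hmuJ
        _ = 2^(N+2) * ENNReal.ofReal ((2:ℝ)^(-(((N+m+1:ℕ)):ℝ))) := hstep1
        _ ≤ 2^(N+2) * ENNReal.ofReal (rtail t (N+m+1) ^ (d:ℝ)) := mul_le_mul_right hstep2 _
        _ ≤ 2^(N+2) * ENNReal.ofReal ((2:ℝ)^(d:ℝ) * r^(d:ℝ)) := by
            refine mul_le_mul_right (ENNReal.ofReal_le_ofReal ?_) _
            rw [← hstep4]
            exact hstep3
        _ = C * ENNReal.ofReal (r ^ (d:ℝ)) := by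
            rw [hC, ENNReal.ofReal_mul (by positivity)]
            ring
      have hpow : EMetric.diam s ^ ((d:ℝ≥0∞).toReal) = ENNReal.ofReal (r ^ (d:ℝ)) := by
        rw [hdiam_eq]
        have h6 : ((d:ℝ≥0∞)).toReal = (d:ℝ) := by simp
        rw [h6]
        exact ENNReal.ofReal_rpow_of_pos hrpos
      rw [hpow]
      exact hfinal
  -- Frostman / mass distribution
  set ν := C⁻¹ • muT t N with hν
  have hν_le : ν ≤ μH[((d:ℝ≥0∞)).toReal] := by
    refine Measure.le_hausdorffMeasure _ _ (ENNReal.ofReal ε₀) (by positivity) (fun s hs => ?_)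
    rw [hν]
    simp only [Measure.smul_apply, smul_eq_mul]
    calc C⁻¹ * muT t N s ≤ C⁻¹ * (C * EMetric.diam s ^ ((d:ℝ≥0∞)).toReal) :=
          mul_le_mul_right (hmass s hs) _
    _ = EMetric.diam s ^ ((d:ℝ≥0∞)).toReal := by
        rw [← mul_assoc, ENNReal.inv_mul_cancel hC0 hCtop, one_mul]
  have hne : μH[((d:ℝ≥0∞)).toReal] (Tset t N) ≠ 0 := by
    have h1 : ν (Tset t N) ≤ μH[((d:ℝ≥0∞)).toReal] (Tset t N) :=
      Measure.le_iff'.1 hν_le (Tset t N)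
    have h2 : ν (Tset t N) = C⁻¹ := by
      rw [hν]
      simp only [Measure.smul_apply, smul_eq_mul]
      rw [muT_Tset ht N, mul_one]
    have h3 : (0:ℝ≥0∞) < C⁻¹ := ENNReal.inv_pos.2 hCtop
    intro hzero
    rw [hzero] at h1
    rw [h2] at h1
    exact absurd (le_antisymm h1 (zero_le)) (ne_of_gt h3)
  have h7 : ((d:ℝ≥0∞)).toReal = ((d:ℝ≥0):ℝ) := by simp
  rw [h7] at hne
  exact le_dimH_of_hausdorffMeasure_ne_zero hne

end Luroth
namespace Luroth
open MeasureTheory Filter Topology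
open scoped ENNReal NNReal

variable {t : ℕ → ℝ}

lemma dimH_Tset_eq (ht : IsLurothSeq t) {N : ℕ} (hG : ∀ n, N ≤ n → 0 < Gseq t n) :
    dimH (Tset t N) = ENNReal.ofReal (liminf (fdim t) atTop) := by
  refine le_antisymm (dimH_Tset_le ht hG) ?_
  refine ENNReal.le_of_forall_nnreal_lt fun c hc => ?_
  have hcL : (c:ℝ) < liminf (fdim t) atTop := by
    by_contra hcl
    push_neg at hcl
    have : ENNReal.ofReal (liminf (fdim t) atTop) ≤ (c : ℝ≥0∞) := by
      rw [← ENNReal.ofReal_coe_nnreal]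
      exact ENNReal.ofReal_le_ofReal hcl
    exact absurd this (not_le.2 hc)
  exact le_dimH_Tset ht hG hcL

lemma isom_const_sub (c : ℝ) : Isometry (fun y : ℝ => c - y) :=
  Isometry.of_dist_eq fun x y => by
    rw [Real.dist_eq, Real.dist_eq]
    have h : c - x - (c - y) = -(x - y) := by ring
    rw [h, abs_neg]

lemma dimH_calM_eq (ht : IsLurothSeq t) {N : ℕ} (hG : ∀ n, N ≤ n → 0 < Gseq t n) :
    dimH (calM t) = ENNReal.ofReal (liminf (fdim t) atTop) := by
  rw [calM_eq ht N, dimH_iUnion]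
  have h : ∀ w : Fin N → Fin 2,
      dimH ((fun y => (Mavg t (fun _ => 0) - presum t w) - y) '' Tset t N)
        = dimH (Tset t N) :=
    fun w => Isometry.dimH_image (isom_const_sub _) _
  rw [iSup_congr h, iSup_const, dimH_Tset_eq ht hG]

lemma calM_isCantor (ht : IsLurothSeq t) {N : ℕ} (hG : ∀ n, N ≤ n → 0 < Gseq t n) :
    IsCantorSet (calM t) := by
  refine ⟨⟨Mavg t (fun _ => 0), ⟨_, rfl⟩⟩, calM_compact ht, ?_, calM_acc ht⟩
  rw [calM_eq ht N]
  classical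
  refine interior_iUnion_empty _ (fun w => ?_) (fun w => ?_)
  · exact (((Tset_compact ht N).image (continuous_const.sub continuous_id)).isClosed)
  · exact interior_image_const_sub _ _ (Tset_interior_empty ht hG)

end Luroth

open Luroth in
/-- If `G(n) > 0` for all `n ≥ N`, then `𝓜` is a Cantor set with
`dim_H(𝓜) = liminf_k (k·log 2)/(−log I(k))`. -/
theorem calM_cantor_of_G_pos (t : ℕ → ℝ) (ht : IsLurothSeq t)
    (N : ℕ) (hG : ∀ n, N ≤ n → 0 < Gseq t n) :
    IsCantorSet (calM t) ∧
      dimH (calM t) =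
        ENNReal.ofReal (Filter.liminf
          (fun k : ℕ => ((k : ℝ) * Real.log 2) / (- Real.log (Ilen t k)))
          Filter.atTop) := by
  have hfun : (fun k : ℕ => ((k : ℝ) * Real.log 2) / (- Real.log (Ilen t k))) = fdim t := by
    funext k
    rw [fdim, Ilen_eq ht k]
  rw [hfun]
  exact ⟨calM_isCantor ht hG, dimH_calM_eq ht hG⟩
end

section
/- Set ρ_n = t_{n+1}/t_n, m_n = inf_{k>n} ρ_k and s_n = sup_{k>n} ρ_k. Assume there exists N ≥ 0 such that 0 < ρ_{n+1} ≤ 1/2 for all n ≥ N. Then for every n ≥ N: (i) if ρ_{n+1} < √(2 + m_n³/(1 − m_n)) − 1, then G(n) > 0; and (ii) if ρ_{n+1} ≥ √(2 + s_n³/(1 − s_n)) − 1, then G(n) ≤ 0. -/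
open MeasureTheory Filter Topology

/-- With `ρ_n = t_{n+1}/t_n`, `m_n = inf_{k>n} ρ_k` and
`s_n = sup_{k>n} ρ_k`, if `0 < ρ_{n+1} ≤ 1/2` for all `n ≥ N`, then for every
`n ≥ N`: (i) `ρ_{n+1} < √(2 + m_n³/(1−m_n)) − 1 → G(n) > 0` and
(ii) `ρ_{n+1} ≥ √(2 + s_n³/(1−s_n)) − 1 → G(n) ≤ 0`. -/
theorem G_sign_criterion (t : ℕ → ℝ) (ht : IsLurothSeq t)
    (N : ℕ)
    (hρ : ∀ n, N ≤ n →
      0 < t (n + 2) / t (n + 1) ∧ t (n + 2) / t (n + 1) ≤ 1 / 2)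
    (n : ℕ) (hn : N ≤ n) :
    (t (n + 2) / t (n + 1) <
        Real.sqrt (2 + (sInf {x : ℝ | ∃ k, n < k ∧ x = t (k + 1) / t k}) ^ 3 /
          (1 - sInf {x : ℝ | ∃ k, n < k ∧ x = t (k + 1) / t k})) - 1 →
      0 < Gseq t n) ∧
    (Real.sqrt (2 + (sSup {x : ℝ | ∃ k, n < k ∧ x = t (k + 1) / t k}) ^ 3 /
          (1 - sSup {x : ℝ | ∃ k, n < k ∧ x = t (k + 1) / t k})) - 1 ≤
        t (n + 2) / t (n + 1) →
      Gseq t n ≤ 0) := by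
  obtain ⟨ht1, hpos, hanti, hlim⟩ := ht
  have hρ' : ∀ k, n + 1 ≤ k → 0 < t (k + 1) / t k ∧ t (k + 1) / t k ≤ 1 / 2 := by
    intro k hk
    obtain ⟨j, rfl⟩ : ∃ j, k = j + 1 := ⟨k - 1, by omega⟩
    exact hρ j (by omega)
  set S : Set ℝ := {x : ℝ | ∃ k, n < k ∧ x = t (k + 1) / t k} with hS
  have hmemS : ∀ k, n < k → t (k + 1) / t k ∈ S := fun k hk => ⟨k, hk, rfl⟩
  have hSbounds : ∀ x ∈ S, 0 < x ∧ x ≤ 1 / 2 := by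
    rintro x ⟨k, hk, rfl⟩
    exact hρ' k hk
  have hbb : BddBelow S := ⟨0, fun x hx => (hSbounds x hx).1.le⟩
  have hba : BddAbove S := ⟨1 / 2, fun x hx => (hSbounds x hx).2⟩
  have hne : S.Nonempty := ⟨_, hmemS (n + 1) (by omega)⟩
  set m := sInf S with hmdef
  set s := sSup S with hsdef
  have hm0 : 0 ≤ m := le_csInf hne fun x hx => (hSbounds x hx).1.le
  have hmle : ∀ k, n < k → m ≤ t (k + 1) / t k := fun k hk => csInf_le hbb (hmemS k hk)
  have hsle : ∀ k, n < k → t (k + 1) / t k ≤ s := fun k hk => le_csSup hba (hmemS k hk)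
  have hs_half : s ≤ 1 / 2 := csSup_le hne fun x hx => (hSbounds x hx).2
  have hm_half : m ≤ 1 / 2 := (hmle (n + 1) (by omega)).trans (hρ' (n + 1) le_rfl).2
  have hs0 : 0 < s := lt_of_lt_of_le (hρ' (n + 1) le_rfl).1 (hsle (n + 1) (by omega))
  have ht1p : 0 < t (n + 1) := hpos _ (by omega)
  have ht2p : 0 < t (n + 2) := hpos _ (by omega)
  have htkp : ∀ k : ℕ, 0 < t (n + 2 + k) := fun k => hpos _ (by omega)
  have htkp' : ∀ k : ℕ, 0 < t (n + 2 + k + 1) := fun k => hpos _ (by omega)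
  -- geometric bounds on t
  have hub : ∀ j, t (n + 2 + j) ≤ t (n + 1) * s * s ^ j := by
    intro j
    induction j with
    | zero =>
      have h := hsle (n + 1) (by omega)
      have : t (n + 2) = t (n + 1) * (t (n + 2) / t (n + 1)) := by field_simp
      calc t (n + 2 + 0) = t (n + 1) * (t (n + 2) / t (n + 1)) := this
        _ ≤ t (n + 1) * s := mul_le_mul_of_nonneg_left h ht1p.le
        _ = t (n + 1) * s * s ^ 0 := by ring
    | succ j ih =>
      have hr := hsle (n + 2 + j) (by omega)
      have htp := htkp j
      have hrat0 : 0 ≤ t (n + 2 + j + 1) / t (n + 2 + j) :=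
        div_nonneg (htkp' j).le htp.le
      have hsn : 0 ≤ t (n + 1) * s * s ^ j :=
        mul_nonneg (mul_nonneg ht1p.le hs0.le) (pow_nonneg hs0.le j)
      have heq : t (n + 2 + j + 1) = t (n + 2 + j) * (t (n + 2 + j + 1) / t (n + 2 + j)) := by
        field_simp
      calc t (n + 2 + (j + 1)) = t (n + 2 + j) * (t (n + 2 + j + 1) / t (n + 2 + j)) := heq
        _ ≤ (t (n + 1) * s * s ^ j) * s := mul_le_mul ih hr hrat0 hsn
        _ = t (n + 1) * s * s ^ (j + 1) := by ring
  have hlb : ∀ j, t (n + 1) * m * m ^ j ≤ t (n + 2 + j) := by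
    intro j
    induction j with
    | zero =>
      have h := hmle (n + 1) (by omega)
      have heq : t (n + 2) = t (n + 1) * (t (n + 2) / t (n + 1)) := by field_simp
      calc t (n + 1) * m * m ^ 0 = t (n + 1) * m := by ring
        _ ≤ t (n + 1) * (t (n + 2) / t (n + 1)) := mul_le_mul_of_nonneg_left h ht1p.le
        _ = t (n + 2 + 0) := heq.symm
    | succ j ih =>
      have hr := hmle (n + 2 + j) (by omega)
      have htp := htkp j
      have heq : t (n + 2 + j + 1) = t (n + 2 + j) * (t (n + 2 + j + 1) / t (n + 2 + j)) := by
        field_simp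
      calc t (n + 1) * m * m ^ (j + 1) = (t (n + 1) * m * m ^ j) * m := by ring
        _ ≤ t (n + 2 + j) * (t (n + 2 + j + 1) / t (n + 2 + j)) :=
            mul_le_mul ih hr hm0 htp.le
        _ = t (n + 2 + (j + 1)) := heq.symm
  -- the summands
  set A : ℕ → ℝ := fun k => (t (n + 2 + k) - t (n + 2 + k + 1)) / 2 with hA
  set B : ℕ → ℝ := fun k => t (n + 2 + k + 1) ^ 2 / (2 * t (n + 2 + k)) with hB
  have hgeq : ∀ k : ℕ, gseq t (n + 2 + k) = A k - B k := by
    intro k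
    have hc := (hρ' (n + 2 + k) (by omega)).2
    unfold gseq
    rw [if_pos hc]
    simp only [hA, hB]
    ring
  have hBeq : ∀ k : ℕ, B k = t (n + 2 + k) * (t (n + 2 + k + 1) / t (n + 2 + k)) ^ 2 / 2 := by
    intro k
    have := (htkp k).ne'
    simp only [hB]
    field_simp
  have hB0 : ∀ k : ℕ, 0 ≤ B k := by
    intro k
    simp only [hB]
    exact div_nonneg (sq_nonneg _) (by linarith [htkp k])
  have hA0 : ∀ k : ℕ, 0 ≤ A k := by
    intro k
    have := hanti (n + 2 + k) (by omega)
    simp only [hA]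
    linarith
  have hBub : ∀ k : ℕ, B k ≤ t (n + 1) * s ^ 3 / 2 * s ^ k := by
    intro k
    rw [hBeq k]
    have hr := hsle (n + 2 + k) (by omega)
    have hrat0 : 0 ≤ t (n + 2 + k + 1) / t (n + 2 + k) :=
      div_nonneg (htkp' k).le (htkp k).le
    have hsn : 0 ≤ t (n + 1) * s * s ^ k :=
      mul_nonneg (mul_nonneg ht1p.le hs0.le) (pow_nonneg hs0.le k)
    have h1 : t (n + 2 + k) * (t (n + 2 + k + 1) / t (n + 2 + k)) ^ 2
        ≤ (t (n + 1) * s * s ^ k) * s ^ 2 :=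
      mul_le_mul (hub k) (pow_le_pow_left₀ hrat0 hr 2) (sq_nonneg _) hsn
    have h2 : t (n + 1) * s ^ 3 / 2 * s ^ k = (t (n + 1) * s * s ^ k) * s ^ 2 / 2 := by ring
    linarith
  have hBlb : ∀ k : ℕ, t (n + 1) * m ^ 3 / 2 * m ^ k ≤ B k := by
    intro k
    rw [hBeq k]
    have hr := hmle (n + 2 + k) (by omega)
    have hmn : 0 ≤ t (n + 1) * m * m ^ k :=
      mul_nonneg (mul_nonneg ht1p.le hm0) (pow_nonneg hm0 k)
    have h1 : (t (n + 1) * m * m ^ k) * m ^ 2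
        ≤ t (n + 2 + k) * (t (n + 2 + k + 1) / t (n + 2 + k)) ^ 2 :=
      mul_le_mul (hlb k) (pow_le_pow_left₀ hm0 hr 2) (sq_nonneg _) (htkp k).le
    have h2 : t (n + 1) * m ^ 3 / 2 * m ^ k = (t (n + 1) * m * m ^ k) * m ^ 2 / 2 := by ring
    linarith
  have hs1 : s < 1 := lt_of_le_of_lt hs_half (by norm_num)
  have hm1 : m < 1 := lt_of_le_of_lt hm_half (by norm_num)
  have hgeomS : Summable (fun k : ℕ => t (n + 1) * s ^ 3 / 2 * s ^ k) :=
    (summable_geometric_of_lt_one hs0.le hs1).mul_left _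
  have hgeomM : Summable (fun k : ℕ => t (n + 1) * m ^ 3 / 2 * m ^ k) :=
    (summable_geometric_of_lt_one hm0 hm1).mul_left _
  have hBsum : Summable B := Summable.of_nonneg_of_le hB0 hBub hgeomS
  -- telescoping sum of A
  have hAsum : HasSum A (t (n + 2) / 2) := by
    rw [hasSum_iff_tendsto_nat_of_nonneg hA0]
    have hps : ∀ K : ℕ, ∑ k ∈ Finset.range K, A k = (t (n + 2) - t (n + 2 + K)) / 2 := by
      intro K
      have h := Finset.sum_range_sub' (fun k => t (n + 2 + k)) K
      calc ∑ k ∈ Finset.range K, A k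
          = (∑ k ∈ Finset.range K, (t (n + 2 + k) - t (n + 2 + k + 1))) / 2 := by
            rw [Finset.sum_div]
        _ = (t (n + 2) - t (n + 2 + K)) / 2 := by
            have h' : (∑ k ∈ Finset.range K, (t (n + 2 + k) - t (n + 2 + k + 1)))
                = t (n + 2) - t (n + 2 + K) := by exact h
            rw [h']
    simp only [hps]
    have h2 : Tendsto (fun K : ℕ => t (n + 2 + K)) atTop (nhds 0) := by
      have := hlim.comp (tendsto_add_atTop_nat (n + 2))
      simpa [Function.comp_def, Nat.add_comm] using this
    have hc : Tendsto (fun _ : ℕ => t (n + 2)) atTop (nhds (t (n + 2))) :=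
      tendsto_const_nhds
    have h3 := (hc.sub h2).div_const 2
    simpa using h3
  set T := ∑' k, B k with hT
  have hTub : T ≤ t (n + 1) * s ^ 3 / 2 * (1 - s)⁻¹ := by
    calc T ≤ ∑' k, t (n + 1) * s ^ 3 / 2 * s ^ k := Summable.tsum_le_tsum hBub hBsum hgeomS
      _ = t (n + 1) * s ^ 3 / 2 * (1 - s)⁻¹ := by
          rw [tsum_mul_left, tsum_geometric_of_lt_one hs0.le hs1]
  have hTlb : t (n + 1) * m ^ 3 / 2 * (1 - m)⁻¹ ≤ T := by
    calc t (n + 1) * m ^ 3 / 2 * (1 - m)⁻¹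
        = ∑' k, t (n + 1) * m ^ 3 / 2 * m ^ k := by
          rw [tsum_mul_left, tsum_geometric_of_lt_one hm0 hm1]
      _ ≤ T := Summable.tsum_le_tsum hBlb hgeomM hBsum
  have hGsum : ∑' k : ℕ, gseq t (n + 2 + k) = t (n + 2) / 2 - T := by
    rw [tsum_congr hgeq, Summable.tsum_sub hAsum.summable hBsum, hAsum.tsum_eq]
  have hg1 : gseq t (n + 1) = t (n + 1) / 2 - t (n + 2) / 2 - t (n + 2) ^ 2 / (2 * t (n + 1)) := by
    have hc := (hρ' (n + 1) le_rfl).2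
    unfold gseq
    rw [if_pos hc]
  set r1 := t (n + 2) / t (n + 1) with hr1
  have hGval : Gseq t n = t (n + 1) / 2 - t (n + 1) * r1 - t (n + 1) * r1 ^ 2 / 2 + T := by
    have e1 : t (n + 2) = t (n + 1) * r1 := by rw [hr1]; field_simp
    unfold Gseq
    rw [hg1, hGsum, e1]
    field_simp
    ring
  have hr1pos : 0 < r1 := (hρ n hn).1
  constructor
  · intro h
    have hm1' : 0 < 1 - m := by linarith
    have hsq : (r1 + 1) ^ 2 < 2 + m ^ 3 / (1 - m) := by
      have h0 : (0 : ℝ) ≤ r1 + 1 := by linarith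
      exact (Real.lt_sqrt h0).1 (by linarith)
    have key : t (n + 1) * ((r1 + 1) ^ 2) < t (n + 1) * (2 + m ^ 3 / (1 - m)) :=
      mul_lt_mul_of_pos_left hsq ht1p
    have hdiv : m ^ 3 / (1 - m) = m ^ 3 * (1 - m)⁻¹ := div_eq_mul_inv _ _
    rw [hdiv] at key
    rw [hGval]
    linarith [hTlb, key]
  · intro h
    have hs1' : 0 < 1 - s := by linarith
    have hX0 : (0 : ℝ) ≤ 2 + s ^ 3 / (1 - s) := by
      have : 0 ≤ s ^ 3 / (1 - s) := div_nonneg (by positivity) hs1'.le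
      linarith
    have h1 : Real.sqrt (2 + s ^ 3 / (1 - s)) ≤ r1 + 1 := by linarith
    have hsq : 2 + s ^ 3 / (1 - s) ≤ (r1 + 1) ^ 2 := by
      have h3 := pow_le_pow_left₀ (Real.sqrt_nonneg (2 + s ^ 3 / (1 - s))) h1 2
      rwa [Real.sq_sqrt hX0] at h3
    have key : t (n + 1) * (2 + s ^ 3 / (1 - s)) ≤ t (n + 1) * ((r1 + 1) ^ 2) :=
      mul_le_mul_of_nonneg_left hsq ht1p.le
    have hdiv : s ^ 3 / (1 - s) = s ^ 3 * (1 - s)⁻¹ := div_eq_mul_inv _ _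
    rw [hdiv] at key
    rw [hGval]
    linarith [hTub, key]
end

section
/- Set ρ_n = t_{n+1}/t_n. Assume ρ = lim_{n→∞} ρ_n exists and ρ = 1/2, and that there is an N ∈ ℕ such that the sequence (ρ_n)_{n≥N} is increasing and ρ_n ≠ 1/2 for all n ≥ N. Then 𝓜 is a Cantor set. -/
open MeasureTheory Filter Topology

namespace CalMAux

lemma fin2_cases (e : Fin 2) : e = 0 ∨ e = 1 := by omega

lemma fin2_cast_nonneg (e : Fin 2) : (0:ℝ) ≤ ((e:ℕ):ℝ) := Nat.cast_nonneg _

lemma fin2_cast_le_one (e : Fin 2) : ((e:ℕ):ℝ) ≤ 1 := by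
  rcases fin2_cases e with h | h <;> simp [h]

/-- The subset-sum map. -/
noncomputable def phi (d : ℕ → ℝ) (ε : ℕ → Fin 2) : ℝ := ∑' k, ((ε k : ℕ):ℝ) * d k

/-- level-n head sum. -/
noncomputable def hd (d : ℕ → ℝ) (n : ℕ) (ε : ℕ → Fin 2) : ℝ :=
  ∑ i ∈ Finset.range n, ((ε i : ℕ):ℝ) * d i

variable {d : ℕ → ℝ}

lemma summable_eps (hs : Summable d) (h0 : ∀ k, 0 ≤ d k) (ε : ℕ → Fin 2) :
    Summable fun k => ((ε k : ℕ):ℝ) * d k :=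
  Summable.of_nonneg_of_le (fun k => mul_nonneg (fin2_cast_nonneg _) (h0 k))
    (fun k => mul_le_of_le_one_left (h0 k) (fin2_cast_le_one _)) hs

set_option maxHeartbeats 1000000 in
lemma continuous_phi (hs : Summable d) (h0 : ∀ k, 0 ≤ d k) : Continuous (phi d) := by
  refine continuous_tsum (fun i => ?_) hs (fun n x => ?_)
  · have hc : Continuous fun x : Fin 2 => ((x:ℕ):ℝ) * d i := continuous_of_discreteTopology
    exact hc.comp (continuous_apply i)
  · rw [Real.norm_eq_abs, abs_mul, abs_of_nonneg (fin2_cast_nonneg _),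
      abs_of_nonneg (h0 n)]
    exact mul_le_of_le_one_left (h0 n) (fin2_cast_le_one _)

lemma isCompact_range_phi (hs : Summable d) (h0 : ∀ k, 0 ≤ d k) :
    IsCompact (Set.range (phi d)) :=
  isCompact_range (continuous_phi hs h0)

lemma phi_decomp (hs : Summable d) (h0 : ∀ k, 0 ≤ d k) (ε : ℕ → Fin 2) (n : ℕ) :
    phi d ε = hd d n ε + ∑' k, ((ε (k + n) : ℕ):ℝ) * d (k + n) :=
  (Summable.sum_add_tsum_nat_add n (summable_eps hs h0 ε)).symm

lemma tail_nonneg (h0 : ∀ k, 0 ≤ d k) (ε : ℕ → Fin 2) (n : ℕ) :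
    0 ≤ ∑' k, ((ε (k + n) : ℕ):ℝ) * d (k + n) :=
  tsum_nonneg fun k => mul_nonneg (fin2_cast_nonneg _) (h0 _)

lemma tail_le (hs : Summable d) (h0 : ∀ k, 0 ≤ d k) (ε : ℕ → Fin 2) (n : ℕ) :
    (∑' k, ((ε (k + n) : ℕ):ℝ) * d (k + n)) ≤ ∑' k, d (k + n) := by
  apply Summable.tsum_le_tsum _
    ((summable_nat_add_iff (f := fun k => ((ε k : ℕ):ℝ) * d k) n).2 (summable_eps hs h0 ε))
    ((summable_nat_add_iff (f := d) n).2 hs)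
  intro k
  exact mul_le_of_le_one_left (h0 _) (fin2_cast_le_one _)

lemma r_split (hs : Summable d) {m n : ℕ} (h : m ≤ n) :
    (∑' k, d (k + m)) = (∑ i ∈ Finset.Ico m n, d i) + ∑' k, d (k + n) := by
  have hs' : Summable fun k => d (k + m) := (summable_nat_add_iff m).2 hs
  rw [(Summable.sum_add_tsum_nat_add (n - m) hs').symm]
  congr 1
  · rw [Finset.sum_Ico_eq_sum_range]
    exact Finset.sum_congr rfl fun i _ => by rw [add_comm]
  · exact tsum_congr fun k => by congr 1; omega


lemma head_sep (hs : Summable d) (h0 : ∀ k, 0 < d k)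
    (hgap : ∀ k, (∑' j, d (j + (k + 1))) < d k) (n : ℕ) (ε ε' : ℕ → Fin 2)
    (h : hd d n ε < hd d n ε') :
    hd d n ε + (∑' k, d (k + n)) < hd d n ε' := by
  have h0' : ∀ k, 0 ≤ d k := fun k => (h0 k).le
  have hex : ∃ i, i < n ∧ ε i ≠ ε' i := by
    by_contra hc
    push_neg at hc
    have : hd d n ε = hd d n ε' := by
      apply Finset.sum_congr rfl
      intro i hi
      rw [hc i (Finset.mem_range.1 hi)]
    exact absurd this (ne_of_lt h)
  classical
  set k := Nat.find hex with hk
  obtain ⟨hkn, hkne⟩ := Nat.find_spec hex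
  have hmin : ∀ i, i < k → ε i = ε' i := by
    intro i hi
    by_contra hne
    rcases lt_or_ge i n with h1 | h1
    · exact absurd ⟨h1, hne⟩ (Nat.find_min hex hi)
    · omega
  -- difference as a sum
  have hdiff : hd d n ε' - hd d n ε
      = ∑ i ∈ Finset.range n, (((ε' i : ℕ):ℝ) - ((ε i : ℕ):ℝ)) * d i := by
    rw [hd, hd, ← Finset.sum_sub_distrib]
    exact Finset.sum_congr rfl fun i _ => by ring
  have hsplit : ∑ i ∈ Finset.range n, (((ε' i : ℕ):ℝ) - ((ε i : ℕ):ℝ)) * d i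
      = (((ε' k : ℕ):ℝ) - ((ε k : ℕ):ℝ)) * d k
        + ∑ i ∈ Finset.Ico (k+1) n, (((ε' i : ℕ):ℝ) - ((ε i : ℕ):ℝ)) * d i := by
    rw [Finset.range_eq_Ico, ← Finset.sum_Ico_consecutive _ (Nat.zero_le k) hkn.le,
      Finset.sum_eq_sum_Ico_succ_bot hkn]
    have hz : ∑ i ∈ Finset.Ico 0 k, (((ε' i : ℕ):ℝ) - ((ε i : ℕ):ℝ)) * d i = 0 := by
      apply Finset.sum_eq_zero
      intro i hi
      rw [hmin i (Finset.mem_Ico.1 hi).2]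
      ring
    rw [hz]; ring
  have hrest : |∑ i ∈ Finset.Ico (k+1) n, (((ε' i : ℕ):ℝ) - ((ε i : ℕ):ℝ)) * d i|
      ≤ ∑ i ∈ Finset.Ico (k+1) n, d i := by
    calc |∑ i ∈ Finset.Ico (k+1) n, (((ε' i : ℕ):ℝ) - ((ε i : ℕ):ℝ)) * d i|
        ≤ ∑ i ∈ Finset.Ico (k+1) n, |(((ε' i : ℕ):ℝ) - ((ε i : ℕ):ℝ)) * d i| :=
          Finset.abs_sum_le_sum_abs _ _
      _ ≤ ∑ i ∈ Finset.Ico (k+1) n, d i := by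
          apply Finset.sum_le_sum
          intro i _
          rw [abs_mul, abs_of_nonneg (h0' i)]
          have h1 := fin2_cast_le_one (ε i)
          have h2 := fin2_cast_le_one (ε' i)
          have h3 := fin2_cast_nonneg (ε i)
          have h4 := fin2_cast_nonneg (ε' i)
          have h5 : |((ε' i : ℕ):ℝ) - ((ε i : ℕ):ℝ)| ≤ 1 :=
            abs_le.2 ⟨by linarith, by linarith⟩
          exact mul_le_of_le_one_left (h0' i) h5
  have hIco : ∑ i ∈ Finset.Ico (k+1) n, d i = (∑' j, d (j + (k+1))) - ∑' j, d (j + n) := by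
    rw [r_split hs (show k + 1 ≤ n by omega)]; ring
  have hrn : (0:ℝ) ≤ ∑' j, d (j + n) := tsum_nonneg fun j => h0' _
  have hgk := hgap k
  -- case on the values at k
  have hvals : ((ε k : ℕ) = 0 ∧ (ε' k : ℕ) = 1) ∨ ((ε k : ℕ) = 1 ∧ (ε' k : ℕ) = 0) := by
    have h1 : (ε k : ℕ) < 2 := (ε k).isLt
    have h2 : (ε' k : ℕ) < 2 := (ε' k).isLt
    have : (ε k : ℕ) ≠ (ε' k : ℕ) := fun hh => hkne (Fin.ext hh)
    omega
  rcases hvals with ⟨h1, h2⟩ | ⟨h1, h2⟩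
  · -- good case: coefficient +1
    have : hd d n ε' - hd d n ε > ∑' j, d (j + n) := by
      rw [hdiff, hsplit, h1, h2]
      push_cast
      have := abs_le.1 hrest
      rw [hIco] at this
      linarith [this.1]
    linarith
  · -- impossible: difference would be negative
    exfalso
    have : hd d n ε' - hd d n ε < 0 := by
      rw [hdiff, hsplit, h1, h2]
      push_cast
      have := abs_le.1 hrest
      rw [hIco] at this
      linarith [this.2]
    linarith


lemma interior_range_phi (hs : Summable d) (h0 : ∀ k, 0 < d k)
    (hgap : ∀ k, (∑' j, d (j + (k + 1))) < d k) :
    interior (Set.range (phi d)) = ∅ := by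
  classical
  have h0' : ∀ k, 0 ≤ d k := fun k => (h0 k).le
  by_contra hne
  obtain ⟨x, hx⟩ := Set.nonempty_iff_ne_empty.2 hne
  obtain ⟨δ, hδ, hball⟩ := Metric.mem_nhds_iff.1 (mem_interior_iff_mem_nhds.1 hx)
  obtain ⟨ε, hε⟩ := interior_subset hx
  have hr0 : Tendsto (fun m => ∑' k, d (k + m)) atTop (𝓝 0) := tendsto_sum_nat_add d
  obtain ⟨n, hn⟩ : ∃ n, (∑' k, d (k + n)) < δ := ((hr0.eventually (gt_mem_nhds hδ)).exists)
  set r := ∑' k, d (k + n) with hrdef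
  have hr0' : 0 ≤ r := tsum_nonneg fun j => h0' _
  set s := hd d n ε with hsdef
  set P : Finset ℝ :=
    Finset.image (fun w : Fin n → Fin 2 => hd d n (fun k => if h : k < n then w ⟨k, h⟩ else 0))
      Finset.univ with hP
  have hmemP : ∀ ε'' : ℕ → Fin 2, hd d n ε'' ∈ P := by
    intro ε''
    rw [hP]
    apply Finset.mem_image.2
    refine ⟨fun i => ε'' i, Finset.mem_univ _, ?_⟩
    apply Finset.sum_congr rfl
    intro i hi
    have hi' := Finset.mem_range.1 hi
    simp [hi']
  set Q := P.filter (fun p => s < p) with hQ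
  have hQsep : ∀ p ∈ Q, s + r < p := by
    intro p hp
    obtain ⟨hpP, hps⟩ := Finset.mem_filter.1 hp
    obtain ⟨w, _, hw⟩ := Finset.mem_image.1 hpP
    rw [← hw]
    exact head_sep hs h0 hgap n ε _ (by rw [hw]; exact hps)
  set η := if hQn : Q.Nonempty then min (δ - r) (Q.min' hQn - (s + r)) / 2 else (δ - r) / 2
    with hηdef
  have hηpos : 0 < η := by
    rw [hηdef]
    split_ifs with hQn
    · have h3 := hQsep _ (Q.min'_mem hQn)
      have h1 : 0 < δ - r := by linarith
      have h2 : 0 < Q.min' hQn - (s + r) := by linarith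
      have := lt_min h1 h2
      linarith [min_le_left (δ - r) (Q.min' hQn - (s + r))]
    · linarith
  have hηδ : r + η < δ := by
    rw [hηdef]
    split_ifs with hQn
    · have hm := min_le_left (δ - r) (Q.min' hQn - (s + r))
      have h3 := hQsep _ (Q.min'_mem hQn)
      have h2 : 0 < Q.min' hQn - (s + r) := by linarith
      have h1 : 0 < δ - r := by linarith
      have : min (δ - r) (Q.min' hQn - (s + r)) > 0 := lt_min h1 h2
      linarith
    · linarith
  have hηQ : ∀ hQn : Q.Nonempty, s + r + η < Q.min' hQn := by
    intro hQn
    rw [hηdef, dif_pos hQn]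
    have hm := min_le_right (δ - r) (Q.min' hQn - (s + r))
    have h3 := hQsep _ (Q.min'_mem hQn)
    linarith
  set y := s + r + η with hy
  have hxeq : x = s + ∑' k, ((ε (k + n) : ℕ):ℝ) * d (k + n) := by
    rw [← hε]; exact phi_decomp hs h0' ε n
  have hT0 := tail_nonneg h0' ε n
  have hTr := tail_le hs h0' ε n
  have hyx : y ∈ Metric.ball x δ := by
    rw [Metric.mem_ball, Real.dist_eq, abs_lt]
    constructor <;> [skip; skip] <;>
      (rw [hxeq]) <;> [linarith; linarith]
  obtain ⟨ε', hε'⟩ := hball hyx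
  have hyeq : y = hd d n ε' + ∑' k, ((ε' (k + n) : ℕ):ℝ) * d (k + n) := by
    rw [← hε']; exact phi_decomp hs h0' ε' n
  have hT0' := tail_nonneg h0' ε' n
  have hTr' := tail_le hs h0' ε' n
  rcases lt_trichotomy (hd d n ε') s with hlt | heq | hgt
  · have hsep := head_sep hs h0 hgap n ε' ε hlt
    linarith
  · rw [heq] at hyeq
    linarith
  · have hQn : Q.Nonempty := ⟨hd d n ε', Finset.mem_filter.2 ⟨hmemP ε', hgt⟩⟩
    have h1 := hηQ hQn
    have h2 := Q.min'_le _ (Finset.mem_filter.2 ⟨hmemP ε', hgt⟩)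
    linarith


lemma integrable_linear_Ioc {c α β : ℝ} :
    MeasureTheory.IntegrableOn (fun z => c * z) (Set.Ioc α β) :=
  (continuous_const.mul continuous_id).integrableOn_Ioc

lemma integral_piece (a c : ℝ) (ha : 0 < a) (hc : 0 < c) :
    (∫ z in Set.Icc (0:ℝ) 1, (if a / c < z then a else c * z)) =
      if 1 ≤ a / c then c / 2 else a - a ^ 2 / (2 * c) := by
  have hθ0 : 0 < a / c := div_pos ha hc
  by_cases h1 : 1 ≤ a / c
  · rw [if_pos h1]
    have hcongr : ∀ z ∈ Set.Icc (0:ℝ) 1, (if a / c < z then a else c * z) = c * z := by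
      intro z hz
      rw [if_neg (by push_neg; exact le_trans hz.2 h1)]
    rw [MeasureTheory.setIntegral_congr_fun measurableSet_Icc hcongr,
      MeasureTheory.integral_Icc_eq_integral_Ioc, ← intervalIntegral.integral_of_le zero_le_one,
      intervalIntegral.integral_const_mul, integral_id]
    ring
  · rw [if_neg h1]
    push_neg at h1
    have hsplit : Set.Ioc (0:ℝ) (a / c) ∪ Set.Ioc (a / c) 1 = Set.Ioc 0 1 :=
      Set.Ioc_union_Ioc_eq_Ioc hθ0.le h1.le
    have hdisj : Disjoint (Set.Ioc (0:ℝ) (a / c)) (Set.Ioc (a / c) 1) :=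
      Set.Ioc_disjoint_Ioc_of_le le_rfl
    have heq1 : ∀ z ∈ Set.Ioc (0:ℝ) (a / c), (if a / c < z then a else c * z) = c * z := by
      intro z hz
      rw [if_neg (by push_neg; exact hz.2)]
    have heq2 : ∀ z ∈ Set.Ioc (a / c) 1, (if a / c < z then a else c * z) = a := by
      intro z hz
      rw [if_pos hz.1]
    have hint1 : MeasureTheory.IntegrableOn (fun z => if a / c < z then a else c * z)
        (Set.Ioc (0:ℝ) (a / c)) :=
      MeasureTheory.IntegrableOn.congr_fun integrable_linear_Ioc
        (fun z hz => (heq1 z hz).symm) measurableSet_Ioc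
    have hint2 : MeasureTheory.IntegrableOn (fun z => if a / c < z then a else c * z)
        (Set.Ioc (a / c) 1) :=
      MeasureTheory.IntegrableOn.congr_fun (MeasureTheory.integrableOn_const
        measure_Ioc_lt_top.ne)
        (fun z hz => (heq2 z hz).symm) measurableSet_Ioc
    rw [MeasureTheory.integral_Icc_eq_integral_Ioc, ← hsplit,
      MeasureTheory.setIntegral_union hdisj measurableSet_Ioc hint1 hint2,
      MeasureTheory.setIntegral_congr_fun measurableSet_Ioc heq1,
      MeasureTheory.setIntegral_congr_fun measurableSet_Ioc heq2,
      ← intervalIntegral.integral_of_le hθ0.le, intervalIntegral.integral_const_mul, integral_id,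
      MeasureTheory.setIntegral_const, Real.volume_real_Ioc_of_le h1.le]
    rw [smul_eq_mul]
    field_simp
    ring



variable {t : ℕ → ℝ}

/-- The value of the integral of one term of `F`. -/
noncomputable def Jt (t : ℕ → ℝ) (n : ℕ) (e : Fin 2) : ℝ :=
  if 1 ≤ (t (n + 1) - t (n + 2)) / t (n + 2 - (e : ℕ)) then t (n + 2 - (e : ℕ)) / 2
  else (t (n + 1) - t (n + 2)) - (t (n + 1) - t (n + 2)) ^ 2 / (2 * t (n + 2 - (e : ℕ)))

lemma te_pos (ht : IsLurothSeq t) (n : ℕ) (e : Fin 2) : 0 < t (n + 2 - (e : ℕ)) := by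
  rcases fin2_cases e with h | h <;> subst h
  · exact ht.pos (n + 2) (by omega)
  · exact ht.pos (n + 1) (by omega)

lemma te_le (ht : IsLurothSeq t) (n : ℕ) (e : Fin 2) : t (n + 2 - (e : ℕ)) ≤ t (n + 1) := by
  rcases fin2_cases e with h | h <;> subst h
  · exact (ht.anti (n + 1) (by omega)).le
  · exact le_refl _

lemma a_pos (ht : IsLurothSeq t) (n : ℕ) : 0 < t (n + 1) - t (n + 2) :=
  sub_pos.2 (ht.anti (n + 1) (by omega))

lemma a_le (ht : IsLurothSeq t) (n : ℕ) : t (n + 1) - t (n + 2) ≤ t (n + 1) := by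
  have := ht.pos (n + 2) (by omega); linarith

lemma Jt_nonneg (ht : IsLurothSeq t) (n : ℕ) (e : Fin 2) : 0 ≤ Jt t n e := by
  rw [Jt]
  split_ifs with h
  · linarith [te_pos ht n e]
  · push_neg at h
    have hc := te_pos ht n e
    have ha := a_pos ht n
    have hlt : t (n + 1) - t (n + 2) < t (n + 2 - (e : ℕ)) := by
      rwa [div_lt_one hc] at h
    have : (t (n + 1) - t (n + 2)) ^ 2 / (2 * t (n + 2 - (e : ℕ)))
        ≤ (t (n + 1) - t (n + 2)) := by
      rw [div_le_iff₀ (by linarith)]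
      nlinarith
    linarith

lemma Jt_le (ht : IsLurothSeq t) (n : ℕ) (e : Fin 2) : Jt t n e ≤ t (n + 1) := by
  rw [Jt]
  split_ifs with h
  · have h1 := te_le ht n e
    have h2 := te_pos ht n e
    linarith
  · have ha := a_le ht n
    have hc := te_pos ht n e
    have hsq : 0 ≤ (t (n + 1) - t (n + 2)) ^ 2 / (2 * t (n + 2 - (e : ℕ))) :=
      div_nonneg (sq_nonneg _) (by linarith)
    linarith

lemma gseq_eq_Jt (ht : IsLurothSeq t) (n : ℕ) : gseq t (n + 1) = Jt t n 1 - Jt t n 0 := by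
  have hu : 0 < t (n + 1) := ht.pos _ (by omega)
  have hv : 0 < t (n + 2) := ht.pos _ (by omega)
  have hvu : t (n + 2) < t (n + 1) := ht.anti (n + 1) (by omega)
  have h1 : Jt t n 1 = (t (n + 1) - t (n + 2))
      - (t (n + 1) - t (n + 2)) ^ 2 / (2 * t (n + 1)) := by
    rw [Jt]
    have : ((1 : Fin 2) : ℕ) = 1 := rfl
    rw [this]
    have hidx : n + 2 - 1 = n + 1 := by omega
    rw [hidx, if_neg]
    push_neg
    rw [div_lt_one hu]
    linarith
  have h0eq : ((0 : Fin 2) : ℕ) = 0 := rfl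
  rw [h1]
  by_cases hb : t (n + 1 + 1) / t (n + 1) ≤ 1 / 2
  · have hb' : 1 ≤ (t (n + 1) - t (n + 2)) / t (n + 2) := by
      rw [le_div_iff₀ hv]
      rw [div_le_iff₀ hu] at hb
      have : n + 1 + 1 = n + 2 := by omega
      rw [this] at hb
      linarith
    rw [gseq, if_pos hb, Jt, h0eq]
    simp only [Nat.sub_zero]
    rw [if_pos hb']
    have : n + 1 + 1 = n + 2 := by omega
    rw [this]
    field_simp
    ring
  · have hb' : ¬ (1 ≤ (t (n + 1) - t (n + 2)) / t (n + 2)) := by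
      push_neg
      rw [div_lt_one hv]
      push_neg at hb
      rw [lt_div_iff₀ hu] at hb
      have : n + 1 + 1 = n + 2 := by omega
      rw [this] at hb
      linarith
    rw [gseq, if_neg hb, Jt, h0eq]
    simp only [Nat.sub_zero]
    rw [if_neg hb']
    have : n + 1 + 1 = n + 2 := by omega
    rw [this]
    field_simp
    ring

lemma gseq_pos (ht : IsLurothSeq t) (k : ℕ) (hk : 1 ≤ k) : 0 < gseq t k := by
  have hu : 0 < t k := ht.pos _ hk
  have hv : 0 < t (k + 1) := ht.pos _ (by omega)
  have hvu : t (k + 1) < t k := ht.anti k hk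
  rw [gseq]
  split_ifs with h
  · rw [div_le_iff₀ hu] at h
    have key : t k / 2 - t (k + 1) / 2 - t (k + 1) ^ 2 / (2 * t k)
        = (t k ^ 2 - t k * t (k + 1) - t (k + 1) ^ 2) / (2 * t k) := by
      field_simp
    rw [key]
    apply div_pos
    · nlinarith
    · linarith
  · have key : t k ^ 2 / (2 * t (k + 1)) - t (k + 1) ^ 2 / (2 * t k)
        + 3 * t (k + 1) / 2 - 3 * t k / 2
        = (t k - t (k + 1)) ^ 3 / (2 * t k * t (k + 1)) := by
      field_simp
      ring
    rw [key]
    apply div_pos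
    · have : 0 < t k - t (k + 1) := by linarith
      positivity
    · positivity


/-- One term of `F`. -/
noncomputable def termF (t : ℕ → ℝ) (ε : ℕ → Fin 2) (n : ℕ) (z : ℝ) : ℝ :=
  if (t (n + 1) - t (n + 2)) / t (n + 2 - (ε n : ℕ)) < z then t (n + 1) - t (n + 2)
  else t (n + 2 - (ε n : ℕ)) * z

lemma F_eq (t : ℕ → ℝ) (ε : ℕ → Fin 2) (z : ℝ) : F t ε z = ∑' n, termF t ε n z := rfl

lemma termF_measurable (ε : ℕ → Fin 2) (n : ℕ) : Measurable (termF t ε n) :=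
  Measurable.ite measurableSet_Ioi measurable_const (measurable_const.mul measurable_id)

lemma termF_nonneg (ht : IsLurothSeq t) (ε : ℕ → Fin 2) (n : ℕ) {z : ℝ}
    (hz : z ∈ Set.Icc (0:ℝ) 1) : 0 ≤ termF t ε n z := by
  rw [termF]
  split_ifs with h
  · exact (a_pos ht n).le
  · exact mul_nonneg (te_pos ht n (ε n)).le hz.1

lemma termF_le (ht : IsLurothSeq t) (ε : ℕ → Fin 2) (n : ℕ) {z : ℝ}
    (hz : z ∈ Set.Icc (0:ℝ) 1) : termF t ε n z ≤ t (n + 1) := by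
  rw [termF]
  split_ifs with h
  · exact a_le ht n
  · have h1 := te_pos ht n (ε n)
    have h2 := te_le ht n (ε n)
    nlinarith [hz.1, hz.2]

lemma integral_termF (ht : IsLurothSeq t) (ε : ℕ → Fin 2) (n : ℕ) :
    (∫ z in Set.Icc (0:ℝ) 1, termF t ε n z) = Jt t n (ε n) :=
  integral_piece _ _ (a_pos ht n) (te_pos ht n (ε n))

lemma tsum_a (ht : IsLurothSeq t) (hsum : Summable fun n => t (n + 1)) :
    ∑' n, (t (n + 1) - t (n + 2)) = 1 := by
  have hs : Summable fun n => t (n + 1) - t (n + 2) :=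
    Summable.of_nonneg_of_le (fun n => (a_pos ht n).le) (fun n => a_le ht n) hsum
  have h1 := hs.hasSum.tendsto_sum_nat
  have h2 : (fun n => ∑ i ∈ Finset.range n, (t (i + 1) - t (i + 2)))
      = fun n => t 1 - t (n + 1) := by
    funext n
    exact Finset.sum_range_sub' (fun i => t (i + 1)) n
  rw [h2] at h1
  have h3 : Tendsto (fun n : ℕ => t 1 - t (n + 1)) atTop (𝓝 (t 1 - 0)) :=
    tendsto_const_nhds.sub (ht.tendsto_zero.comp (tendsto_add_atTop_nat 1))
  have h4 := tendsto_nhds_unique h1 h3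
  rw [ht.t_one] at h4
  linarith

lemma Mavg_eq (ht : IsLurothSeq t) (hsum : Summable fun n => t (n + 1)) (ε : ℕ → Fin 2) :
    Mavg t ε = ∑' n, ((t (n + 1) - t (n + 2)) - Jt t n (ε n)) := by
  have ha0 : ∀ n, (0:ℝ) ≤ t (n + 1) - t (n + 2) := fun n => (a_pos ht n).le
  have hsa : Summable fun n => t (n + 1) - t (n + 2) :=
    Summable.of_nonneg_of_le ha0 (fun n => a_le ht n) hsum
  have hpt : ∀ z ∈ Set.Icc (0:ℝ) 1,
      1 - F t ε z = ∑' n, ((t (n + 1) - t (n + 2)) - termF t ε n z) := by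
    intro z hz
    have hterm_sum : Summable fun n => termF t ε n z :=
      Summable.of_nonneg_of_le (fun n => termF_nonneg ht ε n hz)
        (fun n => termF_le ht ε n hz) hsum
    rw [Summable.tsum_sub hsa hterm_sum, tsum_a ht hsum, F_eq]
  rw [Mavg, MeasureTheory.setIntegral_congr_fun measurableSet_Icc hpt]
  have hbound : ∀ n, ∀ z ∈ Set.Icc (0:ℝ) 1,
      |(t (n + 1) - t (n + 2)) - termF t ε n z| ≤ t (n + 1) := by
    intro n z hz
    have h1 := termF_nonneg ht ε n hz
    have h2 := termF_le ht ε n hz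
    have h3 := ha0 n
    have h4 := a_le ht n
    rw [abs_le]
    constructor <;> linarith
  rw [MeasureTheory.integral_tsum (f := fun n z => (t (n + 1) - t (n + 2)) - termF t ε n z)
    (fun n => ((measurable_const.sub (termF_measurable ε n)).aestronglyMeasurable))
    ?fin]
  case fin =>
    have hb : ∀ n, (∫⁻ z in Set.Icc (0:ℝ) 1,
        ‖(t (n + 1) - t (n + 2)) - termF t ε n z‖₊) ≤ ENNReal.ofReal (t (n + 1)) := by
      intro n
      calc (∫⁻ z in Set.Icc (0:ℝ) 1, ‖(t (n + 1) - t (n + 2)) - termF t ε n z‖₊)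
          ≤ ∫⁻ _z in Set.Icc (0:ℝ) 1, ENNReal.ofReal (t (n + 1)) := by
            apply MeasureTheory.setLIntegral_mono measurable_const
            intro z hz
            rw [← enorm_eq_nnnorm, ← ofReal_norm]
            exact ENNReal.ofReal_le_ofReal (by
              rw [Real.norm_eq_abs]; exact hbound n z hz)
        _ = ENNReal.ofReal (t (n + 1)) := by
            rw [MeasureTheory.setLIntegral_const, Real.volume_Icc]
            norm_num
    apply ne_top_of_le_ne_top ?_ (ENNReal.tsum_le_tsum hb)
    rw [← ENNReal.ofReal_tsum_of_nonneg (fun n => (ht.pos (n + 1) (by omega)).le) hsum]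
    exact ENNReal.ofReal_ne_top
  apply tsum_congr
  intro n
  haveI : IsFiniteMeasure (volume.restrict (Set.Icc (0:ℝ) 1)) := by
    constructor
    rw [Measure.restrict_apply_univ, Real.volume_Icc]
    norm_num
  have hint : MeasureTheory.Integrable (termF t ε n) (volume.restrict (Set.Icc (0:ℝ) 1)) := by
    apply MeasureTheory.Integrable.mono' (MeasureTheory.integrable_const (t (n + 1)))
      (termF_measurable ε n).aestronglyMeasurable
    filter_upwards [MeasureTheory.ae_restrict_mem measurableSet_Icc] with z hz
    rw [Real.norm_eq_abs, abs_of_nonneg (termF_nonneg ht ε n hz)]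
    exact termF_le ht ε n hz
  rw [MeasureTheory.integral_sub (MeasureTheory.integrable_const _) hint,
    MeasureTheory.setIntegral_const, integral_termF ht ε n, Real.volume_real_Icc_of_le zero_le_one]
  norm_num

lemma gseq_le (ht : IsLurothSeq t) (n : ℕ) : gseq t (n + 1) ≤ t (n + 1) := by
  have h1 := gseq_eq_Jt ht n
  have h2 := Jt_le ht n 1
  have h3 := Jt_nonneg ht n 0
  linarith

lemma Mavg_key (ht : IsLurothSeq t) (hsum : Summable fun n => t (n + 1)) (ε : ℕ → Fin 2) :
    Mavg t ε = Mavg t (fun _ => 0) - ∑' n, ((ε n : ℕ):ℝ) * gseq t (n + 1) := by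
  rw [Mavg_eq ht hsum ε, Mavg_eq ht hsum (fun _ => 0)]
  have hJb : ∀ (e : Fin 2) n, |(t (n + 1) - t (n + 2)) - Jt t n e| ≤ t (n + 1) := by
    intro e n
    have h1 := Jt_nonneg ht n e
    have h2 := Jt_le ht n e
    have h3 := (a_pos ht n).le
    have h4 := a_le ht n
    rw [abs_le]; constructor <;> linarith
  have hS1 : Summable fun n => (t (n + 1) - t (n + 2)) - Jt t n ((fun _ => (0:Fin 2)) n) := by
    apply Summable.of_norm_bounded hsum
    intro n
    exact hJb 0 n
  have hS2 : Summable fun n => ((ε n : ℕ):ℝ) * gseq t (n + 1) := by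
    apply Summable.of_nonneg_of_le _ _ hsum
    · intro n
      exact mul_nonneg (fin2_cast_nonneg _) (gseq_pos ht (n + 1) (by omega)).le
    · intro n
      calc ((ε n : ℕ):ℝ) * gseq t (n + 1) ≤ gseq t (n + 1) :=
            mul_le_of_le_one_left (gseq_pos ht (n + 1) (by omega)).le (fin2_cast_le_one _)
        _ ≤ t (n + 1) := gseq_le ht n
  rw [← Summable.tsum_sub hS1 hS2]
  apply tsum_congr
  intro n
  rcases fin2_cases (ε n) with h | h <;> rw [h]
  · norm_num
  · have hg := gseq_eq_Jt ht n
    have : (((1 : Fin 2) : ℕ):ℝ) = 1 := by norm_num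
    rw [this, one_mul, hg]
    ring


lemma hfun_mono {x y : ℝ} (hx : 0 ≤ x) (hxy : x ≤ y) : 1 - y - y ^ 2 ≤ 1 - x - x ^ 2 := by
  nlinarith

lemma gseq_formula (ht : IsLurothSeq t) (m : ℕ) (hm : 1 ≤ m) (hhalf : 2 * t (m + 1) < t m) :
    gseq t m = t m * (1 - t (m + 1) / t m - (t (m + 1) / t m) ^ 2) / 2 := by
  have hu : 0 < t m := ht.pos _ hm
  rw [gseq, if_pos (by rw [div_le_iff₀ hu]; linarith)]
  field_simp

lemma t_decay (ht : IsLurothSeq t) {N₁ : ℕ}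
    (hhalf : ∀ m, N₁ ≤ m → 2 * t (m + 1) < t m) {n : ℕ} (hn : N₁ ≤ n) :
    ∀ k, t (n + k) ≤ t n * (1 / 2) ^ k := by
  intro k
  induction k with
  | zero => simp
  | succ k ih =>
      have h2 := hhalf (n + k) (by omega)
      have h3 : t (n + (k + 1)) = t (n + k + 1) := by norm_num [← Nat.add_assoc]
      rw [h3, pow_succ]
      have h4 : (0:ℝ) < (1 / 2) ^ k := by positivity
      nlinarith

lemma gseq_gap (ht : IsLurothSeq t)
    {N₁ : ℕ} (hN₁ : 1 ≤ N₁)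
    (hhalf : ∀ m, N₁ ≤ m → 2 * t (m + 1) < t m)
    (hmono : ∀ m m', N₁ ≤ m → m ≤ m' → t (m + 1) / t m ≤ t (m' + 1) / t m')
    (n : ℕ) (hn : N₁ ≤ n) :
    (∑' k, gseq t (n + 2 + k)) < gseq t (n + 1) := by
  set ρ : ℕ → ℝ := fun m => t (m + 1) / t m with hρ
  have hpos : ∀ m, 1 ≤ m → 0 < ρ m := fun m hm =>
    div_pos (ht.pos _ (by omega)) (ht.pos _ hm)
  have hhalf' : ∀ m, N₁ ≤ m → ρ m < 1 / 2 := by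
    intro m hm
    have hu : 0 < t m := ht.pos _ (by omega)
    rw [hρ]
    rw [div_lt_iff₀ hu]
    have := hhalf m hm
    linarith
  set w : ℝ := 1 - ρ (n + 2) - ρ (n + 2) ^ 2 with hw
  have hw14 : 1 / 4 ≤ w := by
    have h1 := hpos (n + 2) (by omega)
    have h2 := hhalf' (n + 2) (by omega)
    rw [hw]
    nlinarith
  have hw0 : 0 < w := by linarith
  have step : ∀ k, gseq t (n + 2 + k) ≤ t (n + 2) * w / 2 * (1 / 2) ^ k := by
    intro k
    have hm : N₁ ≤ n + 2 + k := by omega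
    have hfor := gseq_formula ht (n + 2 + k) (by omega) (hhalf _ hm)
    have h1 : 1 - ρ (n + 2 + k) - ρ (n + 2 + k) ^ 2 ≤ w := by
      rw [hw]
      exact hfun_mono (hpos (n + 2) (by omega)).le (hmono (n + 2) (n + 2 + k) (by omega) (by omega))
    have h2 : t (n + 2 + k) ≤ t (n + 2) * (1 / 2) ^ k :=
      t_decay ht hhalf (by omega : N₁ ≤ n + 2) k
    have h3 : 0 ≤ 1 - ρ (n + 2 + k) - ρ (n + 2 + k) ^ 2 := by
      have ha := hpos (n + 2 + k) (by omega)
      have hb := hhalf' (n + 2 + k) hm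
      nlinarith
    have h4 : 0 < t (n + 2 + k) := ht.pos _ (by omega)
    rw [hfor]
    have h5 : (0:ℝ) < (1 / 2) ^ k := by positivity
    nlinarith
  have hSg : Summable fun k => gseq t (n + 2 + k) := by
    apply Summable.of_nonneg_of_le (fun k => (gseq_pos ht (n + 2 + k) (by omega)).le) step
    exact summable_geometric_two.mul_left _
  have hsumle : (∑' k, gseq t (n + 2 + k)) ≤ t (n + 2) * w := by
    calc (∑' k, gseq t (n + 2 + k)) ≤ ∑' k, t (n + 2) * w / 2 * (1 / 2) ^ k :=
          Summable.tsum_le_tsum step hSg (summable_geometric_two.mul_left _)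
      _ = t (n + 2) * w / 2 * 2 := by rw [tsum_mul_left, tsum_geometric_two]
      _ = t (n + 2) * w := by ring
  have hfor1 := gseq_formula ht (n + 1) (by omega) (hhalf _ (by omega : N₁ ≤ n + 1))
  have h4 : w ≤ 1 - ρ (n + 1) - ρ (n + 1) ^ 2 := by
    rw [hw]
    exact hfun_mono (hpos (n + 1) (by omega)).le (hmono (n + 1) (n + 2) (by omega) (by omega))
  have h5 := hhalf (n + 1) (by omega : N₁ ≤ n + 1)
  have h6 : 0 < t (n + 2) := ht.pos _ (by omega)
  have h7 : t (n + 2) * w < gseq t (n + 1) := by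
    rw [hfor1]
    nlinarith
  linarith

end CalMAux

/-- With `ρ_n = t_{n+1}/t_n`, if `lim ρ_n = 1/2` and `(ρ_n)_{n ≥ N}`
is increasing with `ρ_n ≠ 1/2` for all `n ≥ N`, then `𝓜` is a Cantor set. -/
theorem calM_cantor_of_increasing (t : ℕ → ℝ) (ht : IsLurothSeq t)
    (hlim : Tendsto (fun n => t (n + 1) / t n) atTop (nhds (1 / 2)))
    (N : ℕ)
    (hmono : ∀ m n, N ≤ m → m ≤ n → t (m + 1) / t m ≤ t (n + 1) / t n)
    (hne : ∀ n, N ≤ n → t (n + 1) / t n ≠ 1 / 2) :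
    IsCantorSet (calM t) := by
  classical
  set N₁ := max N 1 with hN₁def
  have hN₁1 : 1 ≤ N₁ := le_max_right _ _
  have hρlt : ∀ n, N₁ ≤ n → t (n + 1) / t n < 1 / 2 := by
    intro n hn
    have hle : t (n + 1) / t n ≤ 1 / 2 := by
      apply ge_of_tendsto hlim
      filter_upwards [eventually_ge_atTop n] with m hm
      exact hmono n m (le_trans (le_max_left N 1) hn) hm
    exact lt_of_le_of_ne hle (hne n (le_trans (le_max_left N 1) hn))
  have hhalf : ∀ m, N₁ ≤ m → 2 * t (m + 1) < t m := by
    intro m hm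
    have hu : 0 < t m := ht.pos _ (by omega)
    have h2 := hρlt m hm
    rw [div_lt_iff₀ hu] at h2
    linarith
  have hmono' : ∀ m m', N₁ ≤ m → m ≤ m' → t (m + 1) / t m ≤ t (m' + 1) / t m' :=
    fun m m' hm hmm' => hmono m m' (le_trans (le_max_left N 1) hm) hmm'
  have hsum : Summable fun n => t (n + 1) := by
    apply summable_of_ratio_norm_eventually_le (r := 1 / 2) (by norm_num)
    filter_upwards [eventually_ge_atTop N₁] with n hn
    have h1 := hhalf (n + 1) (by omega)
    have h2 : 0 < t (n + 1 + 1) := ht.pos _ (by omega)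
    have h3 : 0 < t (n + 1) := ht.pos _ (by omega)
    rw [Real.norm_eq_abs, Real.norm_eq_abs, abs_of_pos h2, abs_of_pos h3]
    linarith
  set c : ℕ → ℝ := fun n => gseq t (n + 1) with hcdef
  have hc_pos : ∀ n, 0 < c n := fun n => CalMAux.gseq_pos ht (n + 1) (by omega)
  have hc_nonneg : ∀ n, 0 ≤ c n := fun n => (hc_pos n).le
  have hc_le : ∀ n, c n ≤ t (n + 1) := fun n => CalMAux.gseq_le ht n
  have hc_sum : Summable c := Summable.of_nonneg_of_le hc_nonneg hc_le hsum
  have hkey : ∀ ε : ℕ → Fin 2, Mavg t ε = Mavg t (fun _ => 0) - CalMAux.phi c ε :=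
    fun ε => CalMAux.Mavg_key ht hsum ε
  set A := Mavg t (fun _ => 0) with hAdef
  refine ⟨⟨Mavg t (fun _ => 0), Set.mem_range_self _⟩, ?_, ?_, ?_⟩
  · -- compact
    have hcont : Continuous (Mavg t) := by
      have h : Mavg t = fun ε => A - CalMAux.phi c ε := funext hkey
      rw [h]
      exact continuous_const.sub (CalMAux.continuous_phi hc_sum hc_nonneg)
    exact isCompact_range hcont
  · -- empty interior
    set d : ℕ → ℝ := fun k => c (N₁ + k) with hddef
    have hd_sum : Summable d := by
      have h1 := (summable_nat_add_iff (f := c) N₁).2 hc_sum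
      exact h1.congr fun k => by rw [hddef, Nat.add_comm]
    have hd_pos : ∀ k, 0 < d k := fun k => hc_pos _
    have hd_gap : ∀ k, (∑' j, d (j + (k + 1))) < d k := by
      intro k
      have h1 : (∑' j, d (j + (k + 1))) = ∑' j, gseq t ((N₁ + k) + 2 + j) := by
        apply tsum_congr
        intro j
        show gseq t ((N₁ + (j + (k + 1))) + 1) = gseq t ((N₁ + k) + 2 + j)
        congr 1
        omega
      have h2 := CalMAux.gseq_gap ht hN₁1 hhalf hmono' (N₁ + k) (by omega)
      rw [h1]
      have h3 : d k = gseq t ((N₁ + k) + 1) := rfl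
      rw [h3]
      exact h2
    have hEint : interior (Set.range (CalMAux.phi d)) = ∅ :=
      CalMAux.interior_range_phi hd_sum hd_pos hd_gap
    have hEcpt : IsCompact (Set.range (CalMAux.phi d)) :=
      CalMAux.isCompact_range_phi hd_sum (fun k => (hd_pos k).le)
    set E := Set.range (CalMAux.phi d) with hEdef
    set B : (Fin N₁ → Fin 2) → ℝ := fun w =>
      A - CalMAux.hd c N₁ (fun k => if h : k < N₁ then w ⟨k, h⟩ else 0) with hBdef
    have hcover : calM t ⊆ ⋃ w : Fin N₁ → Fin 2, (fun y : ℝ => B w - y) '' E := by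
      rintro x ⟨ε, rfl⟩
      apply Set.mem_iUnion.2
      refine ⟨fun i => ε i, ⟨CalMAux.phi d (fun j => ε (N₁ + j)), Set.mem_range_self _, ?_⟩⟩
      have hsplit := CalMAux.phi_decomp hc_sum hc_nonneg ε N₁
      have h1 : CalMAux.hd c N₁
          (fun k => if h : k < N₁ then (fun i : Fin N₁ => ε i) ⟨k, h⟩ else 0)
          = CalMAux.hd c N₁ ε := by
        apply Finset.sum_congr rfl
        intro i hi
        have hi' := Finset.mem_range.1 hi
        simp [hi']
      have h2 : CalMAux.phi d (fun j => ε (N₁ + j)) = ∑' k, ((ε (k + N₁) : ℕ):ℝ) * c (k + N₁) := by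
        apply tsum_congr
        intro k
        show ((ε (N₁ + k) : ℕ):ℝ) * c (N₁ + k) = ((ε (k + N₁) : ℕ):ℝ) * c (k + N₁)
        rw [Nat.add_comm N₁ k]
      rw [hkey ε, hsplit, hBdef]
      simp only []
      rw [h1, h2]
      ring
    have hclosed : ∀ w : Fin N₁ → Fin 2, IsClosed ((fun y : ℝ => B w - y) '' E) :=
      fun w => (hEcpt.image (continuous_const.sub continuous_id)).isClosed
    have hint : ∀ w : Fin N₁ → Fin 2, interior ((fun y : ℝ => B w - y) '' E) = ∅ := by
      intro w
      have himg : (fun y : ℝ => B w - y) '' E = ⇑(Homeomorph.subLeft (B w)) '' E := rfl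
      rw [himg, ← Homeomorph.image_interior, hEint, Set.image_empty]
    have hfin : ∀ s : Finset (Fin N₁ → Fin 2),
        interior (⋃ w ∈ s, (fun y : ℝ => B w - y) '' E) = ∅ := by
      intro s
      induction s using Finset.induction_on with
      | empty => simp
      | insert _ _ hws ih =>
          rw [Finset.set_biUnion_insert,
            interior_union_isClosed_of_interior_empty (hclosed _) ih]
          exact hint _
    have huniv : (⋃ w : Fin N₁ → Fin 2, (fun y : ℝ => B w - y) '' E)
        = ⋃ w ∈ (Finset.univ : Finset (Fin N₁ → Fin 2)), (fun y : ℝ => B w - y) '' E := by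
      simp
    have : interior (⋃ w : Fin N₁ → Fin 2, (fun y : ℝ => B w - y) '' E) = ∅ := by
      rw [huniv]
      exact hfin _
    have hsub := interior_mono hcover
    rw [this] at hsub
    exact Set.eq_empty_of_subset_empty hsub
  · -- accumulation points
    rintro x ⟨ε, rfl⟩
    rw [accPt_iff_nhds]
    intro U hU
    obtain ⟨δ, hδ, hball⟩ := Metric.mem_nhds_iff.1 hU
    obtain ⟨n, hn⟩ : ∃ n, c n < δ :=
      ((hc_sum.tendsto_atTop_zero.eventually (gt_mem_nhds hδ)).exists)
    set b : Fin 2 := if ε n = 0 then 1 else 0 with hbdef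
    set ε' := Function.update ε n b with hε'def
    have hSa : Summable fun k => ((ε k : ℕ):ℝ) * c k :=
      CalMAux.summable_eps hc_sum hc_nonneg ε
    have hSb : Summable fun k => ((ε' k : ℕ):ℝ) * c k :=
      CalMAux.summable_eps hc_sum hc_nonneg ε'
    have hdiffsum : CalMAux.phi c ε' - CalMAux.phi c ε
        = ∑' k, ((((ε' k : ℕ)):ℝ) - ((ε k : ℕ):ℝ)) * c k := by
      rw [CalMAux.phi, CalMAux.phi, ← Summable.tsum_sub hSb hSa]
      apply tsum_congr
      intro k
      ring
    have hsingle : (∑' k, ((((ε' k : ℕ)):ℝ) - ((ε k : ℕ):ℝ)) * c k)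
        = (((ε' n : ℕ):ℝ) - ((ε n : ℕ):ℝ)) * c n := by
      apply tsum_eq_single
      intro m hm
      rw [hε'def, Function.update_of_ne hm]
      ring
    have habs : |Mavg t ε' - Mavg t ε| = c n := by
      rw [hkey ε', hkey ε]
      have h4 : A - CalMAux.phi c ε' - (A - CalMAux.phi c ε)
          = -(CalMAux.phi c ε' - CalMAux.phi c ε) := by ring
      rw [h4, abs_neg, hdiffsum, hsingle, hε'def, Function.update_self]
      rcases CalMAux.fin2_cases (ε n) with h | h <;>
        simp [h, hbdef, abs_of_pos (hc_pos n), abs_of_nonneg (hc_pos n).le]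
    refine ⟨Mavg t ε', ⟨hball ?_, Set.mem_range_self _⟩, ?_⟩
    · rw [Metric.mem_ball, Real.dist_eq, habs]
      exact hn
    · intro hco
      rw [hco, sub_self, abs_zero] at habs
      exact absurd habs (hc_pos n).ne
end
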